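/- arXiv:2005.12700 — 11 statements merged into one kernel-verified Lean document; each statement's English description precedes it below -/
import Mathlib

section
/- Let V and W be p-dimensional subspaces of X with bases v, w : Fin p → X respectively, and let P be the orthogonal projection of X onto W. Set A = Gram(w), let B be the p×p matrix with entries B_{ij} = ⟪w i, v j⟫, and set D = Gram(v). Then det(Gram(P ∘ v)) · det(A) = conj(det B) · det B. Equivalently, the Grassmann angle satisfies cos²Θ_{V,W} = |det B|² / (det A · det D). -/
open Matrix

variable {𝕜 X : Type*} [RCLike 𝕜] [NormedAddCommGroup X] [InnerProductSpace 𝕜 X]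
  [FiniteDimensional 𝕜 X]

/-! The projections `P vⱼ` lie in `W = span w`, so `P vⱼ = ∑ₖ Cₖⱼ wₖ` for some matrix `C`.
Since `⟪wᵢ, P vⱼ⟫ = ⟪wᵢ, vⱼ⟫`, this gives `B = A C` and
`Gram (P ∘ v) = Cᴴ B = Cᴴ A C`; as `det A` is real, both sides of the identity equal
`conj (det C) · det A · det B`. -/

namespace Matrix

theorem star_det_of_isHermitian {n R : Type*} [Fintype n] [DecidableEq n] [CommRing R]
    [StarRing R] {A : Matrix n n R} (hA : A.IsHermitian) : star A.det = A.det := by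
  rw [← det_conjTranspose, hA.eq]

theorem det_conjTranspose_mul_mul_det {n R : Type*} [Fintype n] [DecidableEq n] [CommRing R]
    [StarRing R] {A : Matrix n n R} (hA : A.IsHermitian) (C : Matrix n n R) :
    (Cᴴ * (A * C)).det * A.det = star (A * C).det * (A * C).det := by
  simp only [det_mul, det_conjTranspose, star_mul', star_det_of_isHermitian hA]
  ring

variable (𝕜) {E ι κ μ : Type*} [NormedAddCommGroup E] [InnerProductSpace 𝕜 E]

def crossGram (u : ι → E) (x : κ → E) : Matrix ι κ 𝕜 :=
  of fun i j => inner 𝕜 (u i) (x j)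

variable {𝕜} [Fintype ι]

theorem crossGram_sum_smul_right (u : μ → E) (w : ι → E) (C : Matrix ι κ 𝕜) :
    crossGram 𝕜 u (fun j => ∑ k, C k j • w k) = crossGram 𝕜 u w * C := by
  ext i j
  simp [crossGram, mul_apply, inner_sum, inner_smul_right, mul_comm]

theorem crossGram_sum_smul_left (w : ι → E) (y : μ → E) (C : Matrix ι κ 𝕜) :
    crossGram 𝕜 (fun i => ∑ k, C k i • w k) y = Cᴴ * crossGram 𝕜 w y := by
  ext i j
  simp [crossGram, mul_apply, sum_inner, inner_smul_left]

theorem exists_eq_sum_smul_of_forall_mem_span {w : ι → E} {x : κ → E}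
    (hx : ∀ j, x j ∈ Submodule.span 𝕜 (Set.range w)) :
    ∃ C : Matrix ι κ 𝕜, x = fun j => ∑ k, C k j • w k := by
  choose c hc using fun j => (Submodule.mem_span_range_iff_exists_fun 𝕜).mp (hx j)
  exact ⟨of fun k j => c j k, funext fun j => (hc j).symm⟩

end Matrix

theorem Submodule.crossGram_orthogonalProjectionOnto_right {E ι κ : Type*} [NormedAddCommGroup E]
    [InnerProductSpace 𝕜 E] (K : Submodule 𝕜 E) [K.HasOrthogonalProjection] {w : ι → E}
    (hw : ∀ i, w i ∈ K) (v : κ → E) :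
    crossGram 𝕜 w (fun j => (K.orthogonalProjectionOnto (v j) : E)) = crossGram 𝕜 w v := by
  ext i j
  exact (K.coe_inner ⟨w i, hw i⟩ _).symm.trans
    (inner_orthogonalProjectionOnto_eq_of_mem_left ⟨w i, hw i⟩ (v j))

theorem grassmann_angle_formula_equal_dim_general {p : ℕ} (W : Submodule 𝕜 X) (v w : Fin p → X)
    (hwW : Submodule.span 𝕜 (Set.range w) = W) :
    (Matrix.of fun i j : Fin p =>
        (inner 𝕜 ((W.orthogonalProjectionOnto (v i) : X)) ((W.orthogonalProjectionOnto (v j) : X)) : 𝕜)).det *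
      (Matrix.of fun i j : Fin p => (inner 𝕜 (w i) (w j) : 𝕜)).det =
    (starRingEnd 𝕜) ((Matrix.of fun i j : Fin p => (inner 𝕜 (w i) (v j) : 𝕜)).det) *
      (Matrix.of fun i j : Fin p => (inner 𝕜 (w i) (v j) : 𝕜)).det := by
  have hw_mem : ∀ i, w i ∈ W := fun i => hwW ▸ Submodule.subset_span ⟨i, rfl⟩
  obtain ⟨C, hC⟩ := exists_eq_sum_smul_of_forall_mem_span (w := w)
    (x := fun j => (W.orthogonalProjectionOnto (v j) : X)) fun j => by
      rw [hwW]; exact Submodule.coe_mem _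
  have hB : crossGram 𝕜 w v = gram 𝕜 w * C := by
    rw [← W.crossGram_orthogonalProjectionOnto_right hw_mem, hC]
    exact crossGram_sum_smul_right w w C
  have hG : crossGram 𝕜 (fun j => (W.orthogonalProjectionOnto (v j) : X))
      (fun j => (W.orthogonalProjectionOnto (v j) : X)) = Cᴴ * crossGram 𝕜 w v := by
    rw [← W.crossGram_orthogonalProjectionOnto_right hw_mem v, ← crossGram_sum_smul_left, ← hC]
  have key := det_conjTranspose_mul_mul_det (isHermitian_gram 𝕜 w) C
  rw [← hB, ← hG] at key
  exact key

/-- For `p`-dimensional subspaces `V, W` with bases `v, w`, and `P` the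
orthogonal projection onto `W`, we have
`det (Gram (P ∘ v)) * det A = conj (det B) * det B`,
where `A = Gram w`, `B i j = ⟪w i, v j⟫`.  Equivalently,
`cos² Θ_{V,W} = |det B|² / (det A * det D)` with `D = Gram v`. -/
theorem grassmann_angle_formula_equal_dim {p : ℕ} (V W : Submodule 𝕜 X) (v w : Fin p → X)
    (hv : LinearIndependent 𝕜 v) (hvV : Submodule.span 𝕜 (Set.range v) = V)
    (hw : LinearIndependent 𝕜 w) (hwW : Submodule.span 𝕜 (Set.range w) = W) :
    (Matrix.of fun i j : Fin p =>
        (inner 𝕜 ((W.orthogonalProjectionOnto (v i) : X)) ((W.orthogonalProjectionOnto (v j) : X)) : 𝕜)).det *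
      (Matrix.of fun i j : Fin p => (inner 𝕜 (w i) (w j) : 𝕜)).det =
    (starRingEnd 𝕜) ((Matrix.of fun i j : Fin p => (inner 𝕜 (w i) (v j) : 𝕜)).det) *
      (Matrix.of fun i j : Fin p => (inner 𝕜 (w i) (v j) : 𝕜)).det :=
  grassmann_angle_formula_equal_dim_general W v w hwW
end

section
/- Let e : Fin p → X be an orthonormal family spanning a subspace V and f : Fin q → X an orthonormal family spanning a subspace W. Let M be the q×p matrix with entries M_{ij} = ⟪f i, e j⟫ (the matrix of the orthogonal projection from V to W in these bases), and let Q be the orthogonal projection of X onto W⊥. Then det(Gram(Q ∘ e)) = det(1_{q×q} − M · Mᴴ). Equivalently, cos²Θ⊥_{V,W} = det(1 − M Mᴴ). -/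
/-!
Let `P` and `Q = 1 - P` be the orthogonal projections onto `W` and `Wᗮ`. Since `Q` is self-adjoint
and idempotent, `⟪Q x, Q y⟫ = ⟪x, y⟫ - ⟪x, P y⟫`, and expanding `P y` in the orthonormal basis `f`
of `W` gives `⟪e i, P e j⟫ = (Mᴴ M) i j`. Hence `Gram (Q ∘ e) = 1 - Mᴴ M`, and Sylvester's
identity `det (1 - Mᴴ M) = det (1 - M Mᴴ)` finishes the proof.
-/

open scoped Matrix

variable {𝕜 X : Type*} [RCLike 𝕜] [NormedAddCommGroup X] [InnerProductSpace 𝕜 X]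
  [FiniteDimensional 𝕜 X]

open Submodule Matrix

section

variable {ι n E : Type*} [NormedAddCommGroup E] [InnerProductSpace 𝕜 E]

theorem Submodule.mem_orthogonal_span_iff {s : Set E} {v : E} :
    v ∈ (span 𝕜 s)ᗮ ↔ ∀ u ∈ s, inner 𝕜 u v = 0 := by
  rw [← span_singleton_le_iff_mem, ← isOrtho_iff_le, isOrtho_comm, isOrtho_span]
  simp

variable [Fintype ι] {W : Submodule 𝕜 E} [W.HasOrthogonalProjection] {f : ι → E}

theorem Orthonormal.starProjection_eq_sum (hf : Orthonormal 𝕜 f)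
    (hfW : span 𝕜 (Set.range f) = W) (x : E) :
    W.starProjection x = ∑ k, inner 𝕜 (f k) x • f k := by
  subst hfW
  refine eq_starProjection_of_mem_orthogonal
    (sum_mem fun k _ => smul_mem _ _ (subset_span ⟨k, rfl⟩)) ?_
  rw [mem_orthogonal_span_iff]
  rintro _ ⟨j, rfl⟩
  rw [inner_sub_right, hf.inner_right_fintype, sub_self]

theorem Orthonormal.inner_starProjection_eq_sum (hf : Orthonormal 𝕜 f)
    (hfW : span 𝕜 (Set.range f) = W) (x y : E) :
    inner 𝕜 x (W.starProjection y) = ∑ k, star (inner 𝕜 (f k) x) * inner 𝕜 (f k) y := by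
  simp [hf.starProjection_eq_sum hfW, inner_sum, inner_smul_right, mul_comm]

theorem Submodule.inner_starProjection_orthogonal (x y : E) :
    inner 𝕜 (Wᗮ.starProjection x) (Wᗮ.starProjection y) =
      inner 𝕜 x y - inner 𝕜 x (W.starProjection y) := by
  rw [inner_starProjection_left_eq_right,
    starProjection_eq_self_iff.mpr (Wᗮ.starProjection_apply_mem y),
    starProjection_orthogonal_val, inner_sub_right]

theorem Orthonormal.gram_starProjection_orthogonal (hf : Orthonormal 𝕜 f)
    (hfW : span 𝕜 (Set.range f) = W) (v : n → E) :
    gram 𝕜 (fun i => Wᗮ.starProjection (v i)) =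
      gram 𝕜 v - (of fun k j => inner 𝕜 (f k) (v j))ᴴ * of fun k j => inner 𝕜 (f k) (v j) := by
  ext i j
  rw [Matrix.sub_apply, gram_apply, gram_apply, inner_starProjection_orthogonal,
    hf.inner_starProjection_eq_sum hfW]
  simp [mul_apply]

end

theorem complementary_grassmann_angle_orthonormal_general {p q : ℕ} (W : Submodule 𝕜 X)
    (e : Fin p → X) (f : Fin q → X)
    (he : Orthonormal 𝕜 e)
    (hf : Orthonormal 𝕜 f) (hfW : Submodule.span 𝕜 (Set.range f) = W) :
    (Matrix.of fun i j : Fin p =>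
        (inner 𝕜 (((Wᗮ).orthogonalProjectionOnto (e i) : X)) (((Wᗮ).orthogonalProjectionOnto (e j) : X)) : 𝕜)).det =
    ((1 : Matrix (Fin q) (Fin q) 𝕜) -
        (Matrix.of fun (i : Fin q) (j : Fin p) => (inner 𝕜 (f i) (e j) : 𝕜)) *
          (Matrix.of fun (i : Fin q) (j : Fin p) => (inner 𝕜 (f i) (e j) : 𝕜))ᴴ).det := by
  have hgram := hf.gram_starProjection_orthogonal hfW e
  rw [gram_eq_one_iff_orthonormal.mpr he] at hgram
  exact (congrArg det hgram).trans (det_one_sub_mul_comm _ _)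

/-- For orthonormal families `e` spanning `V` and `f` spanning `W`, with
`M i j = ⟪f i, e j⟫` the matrix of the orthogonal projection `V → W` in these bases, and `Q`
the orthogonal projection onto `Wᗮ`: `det (Gram (Q ∘ e)) = det (1 - M * Mᴴ)`.
Equivalently `cos² Θ⊥_{V,W} = det (1 - M Mᴴ)`. -/
theorem complementary_grassmann_angle_orthonormal {p q : ℕ} (V W : Submodule 𝕜 X)
    (e : Fin p → X) (f : Fin q → X)
    (he : Orthonormal 𝕜 e) (heV : Submodule.span 𝕜 (Set.range e) = V)
    (hf : Orthonormal 𝕜 f) (hfW : Submodule.span 𝕜 (Set.range f) = W) :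
    (Matrix.of fun i j : Fin p =>
        (inner 𝕜 (((Wᗮ).orthogonalProjectionOnto (e i) : X)) (((Wᗮ).orthogonalProjectionOnto (e j) : X)) : 𝕜)).det =
    ((1 : Matrix (Fin q) (Fin q) 𝕜) -
        (Matrix.of fun (i : Fin q) (j : Fin p) => (inner 𝕜 (f i) (e j) : 𝕜)) *
          (Matrix.of fun (i : Fin q) (j : Fin p) => (inner 𝕜 (f i) (e j) : 𝕜))ᴴ).det :=
  complementary_grassmann_angle_orthonormal_general W e f he hf hfW
end

section
/- Let e : Fin n → X be an orthonormal basis of X and v : Fin p → X a linearly independent family. For each subset I ⊆ Fin n with |I| = p, let W_I = span{e i : i ∈ I} be the corresponding coordinate p-subspace. Then ∑_{I ⊆ Fin n, |I| = p} det(Gram(P_{W_I} ∘ v)) = det(Gram(v)). Equivalently, for V = span(v), ∑_I cos²Θ_{V,W_I} = 1. -/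
/-
With `M` the matrix of coordinates `⟪e k, v j⟫`, Parseval's identity gives `Gram v = Mᴴ M`, and
for a coordinate subspace `W_I` it gives `Gram (P_{W_I} ∘ v) = M_Iᴴ M_I`, where `M_I` keeps the
rows indexed by `I`. The claim is therefore the Cauchy–Binet formula for `det (Mᴴ M)`.
Cauchy–Binet in turn: expanding `det (B A)` multilinearly in its rows gives a sum over all maps
`f : n → ι`; non-injective `f` contribute nothing, and grouping the injective ones by their image
`s` leaves exactly the maps into `s`, whose contributions add up, by the same expansion, to
`det (B_s A_s)`.
-/

open Finset Function Matrix Submodule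
open scoped InnerProductSpace

namespace Matrix

variable {R n ι : Type*} [CommRing R] [Fintype n] [DecidableEq n]

theorem det_mul_eq_sum_prod_mul_det_submatrix [Fintype ι] (B : Matrix n ι R) (A : Matrix ι n R) :
    (B * A).det = ∑ f : n → ι, (∏ i, B i (f i)) * (A.submatrix f id).det := by
  have hrows : B * A = fun i => ∑ k, B i k • A k := by
    ext i j
    simp [mul_apply, Finset.sum_apply]
  calc (B * A).det = detRowAlternating (fun i => ∑ k, B i k • A k) :=
        congrArg detRowAlternating hrows
    _ = ∑ f : n → ι, detRowAlternating (fun i => B i (f i) • A (f i)) :=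
        detRowAlternating.toMultilinearMap.map_sum fun i k => B i k • A k
    _ = _ := Finset.sum_congr rfl fun f _ =>
        detRowAlternating.toMultilinearMap.map_smul_univ (fun i => B i (f i)) (fun i => A (f i))

theorem det_submatrix_eq_zero_of_not_injective (A : Matrix ι n R) {f : n → ι}
    (hf : ¬Injective f) : (A.submatrix f id).det = 0 := by
  obtain ⟨i, j, hij, hne⟩ := not_injective_iff.mp hf
  exact det_zero_of_row_eq hne (by ext; simp [hij])

variable [Fintype ι] [DecidableEq ι]

theorem det_submatrix_mul_submatrix_eq_sum (B : Matrix n ι R) (A : Matrix ι n R)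
    (s : Finset ι) :
    (B.submatrix id ((↑) : s → ι) * A.submatrix ((↑) : s → ι) id).det =
      ∑ f : n → ι with ∀ i, f i ∈ s, (∏ i, B i (f i)) * (A.submatrix f id).det := by
  rw [det_mul_eq_sum_prod_mul_det_submatrix,
    sum_subtype (p := fun f : n → ι => ∀ i, f i ∈ s) _ (by simp)]
  exact Fintype.sum_equiv (Equiv.subtypePiEquivPi (p := fun _ k => k ∈ s)).symm _ _ fun _ => rfl

theorem det_mul_eq_sum_det_submatrix_mul_submatrix (B : Matrix n ι R) (A : Matrix ι n R) :
    (B * A).det = ∑ s ∈ powersetCard (Fintype.card n) (univ : Finset ι),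
      (B.submatrix id ((↑) : s → ι) * A.submatrix ((↑) : s → ι) id).det := by
  set F : (n → ι) → R := fun f => (∏ i, B i (f i)) * (A.submatrix f id).det
  have hF : ∀ f, ¬Injective f → F f = 0 := fun f hf => by
    simp [F, det_submatrix_eq_zero_of_not_injective A hf]
  have hmem_iff_injective :
      ∀ f : n → ι, univ.image f ∈ powersetCard (Fintype.card n) univ ↔ Injective f := by
    intro f
    rw [mem_powersetCard, ← card_univ, card_image_iff, coe_univ, Set.injOn_univ]
    exact and_iff_right (subset_univ _)
  have hfiber : ∀ s ∈ powersetCard (Fintype.card n) univ,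
      ∑ f with univ.image f = s, F f = ∑ f with ∀ i, f i ∈ s, F f := by
    intro s hs
    refine sum_subset (fun f hf => ?_) fun f hf hfs => hF f fun hf' => hfs ?_
    · simp only [mem_filter, mem_univ, true_and] at hf ⊢
      exact fun i => hf ▸ mem_image_of_mem f (mem_univ i)
    · simp only [mem_filter, mem_univ, true_and] at hf ⊢
      refine eq_of_subset_of_card_le (fun k hk => ?_) ?_
      · obtain ⟨i, -, rfl⟩ := mem_image.mp hk
        exact hf i
      · rw [(mem_powersetCard.mp hs).2, card_image_of_injective _ hf', card_univ]
  calc (B * A).det = ∑ f, F f := det_mul_eq_sum_prod_mul_det_submatrix B A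
    _ = ∑ f with univ.image f ∈ powersetCard (Fintype.card n) univ, F f :=
        (sum_filter_of_ne fun f _ hf => (hmem_iff_injective f).mpr (not_imp_comm.mp (hF f) hf)).symm
    _ = ∑ s ∈ powersetCard (Fintype.card n) univ, ∑ f with univ.image f = s, F f :=
        (sum_fiberwise_eq_sum_filter _ _ _ _).symm
    _ = _ := sum_congr rfl fun s hs =>
        (hfiber s hs).trans (det_submatrix_mul_submatrix_eq_sum B A s).symm

end Matrix

section InnerProductSpace

variable {𝕜 E : Type*} [RCLike 𝕜] [NormedAddCommGroup E] [InnerProductSpace 𝕜 E]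

theorem OrthonormalBasis.gram_orthogonalProjectionOnto {κ n : Type*} [Fintype κ]
    {U : Submodule 𝕜 E} [U.HasOrthogonalProjection] (b : OrthonormalBasis κ 𝕜 U) (v : n → E) :
    gram 𝕜 (fun i => (U.orthogonalProjectionOnto (v i) : E)) =
      (of fun k j => ⟪(b k : E), v j⟫_𝕜)ᴴ * of fun k j => ⟪(b k : E), v j⟫_𝕜 := by
  have h := gram_eq_conjTranspose_mul b (U.orthogonalProjectionOnto ∘ v)
  simp only [b.repr_apply_apply, Function.comp_apply,
    inner_orthogonalProjectionOnto_eq_of_mem_left] at h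
  exact h

theorem Orthonormal.gram_orthogonalProjectionOnto_span_image {ι n : Type*} {e : ι → E}
    (he : Orthonormal 𝕜 e) (s : Finset ι) [(span 𝕜 (e '' s)).HasOrthogonalProjection]
    (v : n → E) :
    gram 𝕜 (fun i => ((span 𝕜 (e '' s)).orthogonalProjectionOnto (v i) : E)) =
      (of fun (k : s) j => ⟪e k, v j⟫_𝕜)ᴴ * of fun (k : s) j => ⟪e k, v j⟫_𝕜 := by
  classical
  let b := (OrthonormalBasis.span he s).map (LinearIsometryEquiv.ofEq _ _ (by rw [coe_image]))
  have hb : ∀ k, (b k : E) = e k := fun k => by simp [b]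
  simp only [b.gram_orthogonalProjectionOnto, hb]

end InnerProductSpace

variable {𝕜 X : Type*} [RCLike 𝕜] [NormedAddCommGroup X] [InnerProductSpace 𝕜 X]
  [FiniteDimensional 𝕜 X]

theorem sum_sq_cos_grassmann_coordinate_subspaces_general {n p : ℕ} (e : Fin n → X)
    (he : Orthonormal 𝕜 e) (heX : Submodule.span 𝕜 (Set.range e) = ⊤)
    (v : Fin p → X) :
    ∑ I ∈ Finset.powersetCard p (Finset.univ : Finset (Fin n)),
        (Matrix.of fun i j : Fin p =>
          (inner 𝕜 ((Submodule.orthogonalProjection (Submodule.span 𝕜 (e '' ↑I)) (v i) : X))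
                 ((Submodule.orthogonalProjection (Submodule.span 𝕜 (e '' ↑I)) (v j) : X)) : 𝕜)).det =
      (Matrix.of fun i j : Fin p => (inner 𝕜 (v i) (v j) : 𝕜)).det := by
  let M : Matrix (Fin n) (Fin p) 𝕜 := of fun k j => ⟪e k, v j⟫_𝕜
  have hgram : gram 𝕜 v = Mᴴ * M := by
    simpa [M, OrthonormalBasis.repr_apply_apply] using
      gram_eq_conjTranspose_mul (OrthonormalBasis.mk he heX.ge) v
  have hgram_proj : ∀ I : Finset (Fin n),
      gram 𝕜 (fun i => ((span 𝕜 (e '' I)).orthogonalProjectionOnto (v i) : X)) =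
        Mᴴ.submatrix id ((↑) : I → Fin n) * M.submatrix ((↑) : I → Fin n) id := fun I => by
    rw [he.gram_orthogonalProjectionOnto_span_image, ← conjTranspose_submatrix]
    rfl
  show ∑ I ∈ powersetCard p (univ : Finset (Fin n)),
      (gram 𝕜 fun i => ((span 𝕜 (e '' I)).orthogonalProjectionOnto (v i) : X)).det =
    (gram 𝕜 v).det
  rw [hgram, det_mul_eq_sum_det_submatrix_mul_submatrix, Fintype.card_fin]
  exact sum_congr rfl fun I _ => by rw [hgram_proj]

/-- Let `e : Fin n → X` be an orthonormal basis of `X` and `v : Fin p → X` a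
linearly independent family.  Summing over all `p`-element subsets `I` of `Fin n`, with
`W_I = span {e i : i ∈ I}`: `∑_I det (Gram (P_{W_I} ∘ v)) = det (Gram v)`.
Equivalently, for `V = span v`, `∑_I cos² Θ_{V,W_I} = 1`. -/
theorem sum_sq_cos_grassmann_coordinate_subspaces {n p : ℕ} (e : Fin n → X)
    (he : Orthonormal 𝕜 e) (heX : Submodule.span 𝕜 (Set.range e) = ⊤)
    (v : Fin p → X) (hv : LinearIndependent 𝕜 v) :
    ∑ I ∈ Finset.powersetCard p (Finset.univ : Finset (Fin n)),
        (Matrix.of fun i j : Fin p =>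
          (inner 𝕜 ((Submodule.orthogonalProjection (Submodule.span 𝕜 (e '' ↑I)) (v i) : X))
                 ((Submodule.orthogonalProjection (Submodule.span 𝕜 (e '' ↑I)) (v j) : X)) : 𝕜)).det =
      (Matrix.of fun i j : Fin p => (inner 𝕜 (v i) (v j) : 𝕜)).det :=
  sum_sq_cos_grassmann_coordinate_subspaces_general e he heX v
end

section
/- Let e : Fin n → X be an orthonormal basis of X, v : Fin p → X a linearly independent family, and q an integer with p ≤ q ≤ n. For each subset I ⊆ Fin n with |I| = q, let W_I = span{e i : i ∈ I}. Then ∑_{I ⊆ Fin n, |I| = q} det(Gram(P_{W_I} ∘ v)) = C(n−p, n−q) · det(Gram(v)), where C denotes the binomial coefficient. Equivalently, for V = span(v), ∑_I cos²Θ_{V,W_I} = C(n−p, n−q). -/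
variable {𝕜 X : Type*} [RCLike 𝕜] [NormedAddCommGroup X] [InnerProductSpace 𝕜 X]
  [FiniteDimensional 𝕜 X]

/-!
Put `a k j = ⟪e k, v j⟫`. The projected Gram matrix for `W_I` is `∑_{k ∈ I} conj (a k) ⊗ a k`,
so by multilinearity of the determinant in the rows its determinant is a sum over maps
`f : Fin p → Fin n` with image in `I` of `∏ i, conj (a (f i) i) * det (a (f i) j)`, and only
injective `f` contribute. Summing over the `q`-sets `I` counts the term of an injective `f` once
for each `q`-set containing its `p`-element image, i.e. `C(n-p, q-p)` times, while by Parseval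
the sum of all these terms is `det Gram(v)`.
-/

open Finset

namespace Matrix

variable {R ι κ : Type*} [CommRing R] [Fintype ι] [DecidableEq ι] [Fintype κ] [DecidableEq κ]

theorem det_of_sum_mul_eq_sum (A B : Matrix ι κ R) (s : Finset ι) :
    (of fun i j => ∑ k ∈ s, B k i * A k j).det
      = ∑ f : κ → ι, if univ.image f ⊆ s then (∏ i, B (f i) i) * (A.submatrix f id).det
          else 0 := by
  have hrows : (of fun i j => ∑ k ∈ s, B k i * A k j)
      = fun i => ∑ k, (if k ∈ s then B k i else 0) • A k := by
    ext i j
    simp [sum_apply, ite_smul, ite_apply]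
  unfold det
  rw [hrows, ← AlternatingMap.coe_multilinearMap, MultilinearMap.map_sum]
  refine sum_congr rfl fun f _ => ?_
  rw [MultilinearMap.map_smul_univ, smul_eq_mul, prod_ite_zero]
  simp only [mem_univ, forall_const, ite_mul, zero_mul, image_subset_iff]
  rfl

theorem sum_powersetCard_det_of_sum_mul (A B : Matrix ι κ R) {q : ℕ}
    (hq : Fintype.card κ ≤ q) :
    ∑ I ∈ powersetCard q univ, (of fun i j => ∑ k ∈ I, B k i * A k j).det
      = (Fintype.card ι - Fintype.card κ).choose (q - Fintype.card κ)
          * (of fun i j => ∑ k, B k i * A k j).det := by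
  set N := (Fintype.card ι - Fintype.card κ).choose (q - Fintype.card κ)
  have hcount : ∀ f : κ → ι, Function.Injective f →
      #{I ∈ powersetCard q univ | univ.image f ⊆ I} = N := by
    intro f hf
    rw [card_filter_powersetCard_subset _ _ _ (subset_univ _), card_univ,
      card_image_of_injective _ hf, card_univ]
    rwa [card_image_of_injective _ hf, card_univ]
  have hzero : ∀ f : κ → ι, ¬ Function.Injective f → (A.submatrix f id).det = 0 := by
    intro f hf
    obtain ⟨i, j, hij, hne⟩ := Function.not_injective_iff.mp hf
    exact det_zero_of_row_eq hne (by ext; simp [hij])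
  calc ∑ I ∈ powersetCard q univ, (of fun i j => ∑ k ∈ I, B k i * A k j).det
      = ∑ f : κ → ι, #{I ∈ powersetCard q univ | univ.image f ⊆ I}
          • ((∏ i, B (f i) i) * (A.submatrix f id).det) := by
        simp_rw [det_of_sum_mul_eq_sum, sum_comm (s := powersetCard q univ), ← sum_filter,
          sum_const]
    _ = ∑ f : κ → ι, N • ((∏ i, B (f i) i) * (A.submatrix f id).det) := by
        refine sum_congr rfl fun f _ => ?_
        by_cases hf : Function.Injective f
        · rw [hcount f hf]
        · rw [hzero f hf, mul_zero, smul_zero, smul_zero]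
    _ = N * (of fun i j => ∑ k, B k i * A k j).det := by
        simp only [det_of_sum_mul_eq_sum, subset_univ, if_true, nsmul_eq_mul, mul_sum]

end Matrix

theorem Orthonormal.inner_orthogonalProjection_span_image {ι : Type*} {e : ι → X}
    (he : Orthonormal 𝕜 e) (s : Finset ι) (x y : X) :
    inner 𝕜 ((Submodule.span 𝕜 (e '' s)).orthogonalProjectionOnto x : X)
        ((Submodule.span 𝕜 (e '' s)).orthogonalProjectionOnto y : X)
      = ∑ k ∈ s, inner 𝕜 x (e k) * inner 𝕜 (e k) y := by
  classical
  rw [← coe_image, ← Submodule.coe_inner,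
    Submodule.inner_orthogonalProjectionOnto_eq_of_mem_right,
    (OrthonormalBasis.span he s).orthogonalProjectionOnto_apply_eq_sum, Submodule.coe_sum,
    inner_sum, ← sum_coe_sort s]
  simp [inner_smul_right, mul_comm]

theorem sum_sq_cos_grassmann_coordinate_subspaces_higher_dim_general {n p q : ℕ} (e : Fin n → X)
    (he : Orthonormal 𝕜 e) (heX : Submodule.span 𝕜 (Set.range e) = ⊤)
    (v : Fin p → X)
    (hpq : p ≤ q) (hqn : q ≤ n) :
    ∑ I ∈ Finset.powersetCard q (Finset.univ : Finset (Fin n)),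
        (Matrix.of fun i j : Fin p =>
          (inner 𝕜 ((Submodule.orthogonalProjection (Submodule.span 𝕜 (e '' ↑I)) (v i) : X))
                 ((Submodule.orthogonalProjection (Submodule.span 𝕜 (e '' ↑I)) (v j) : X)) : 𝕜)).det =
      ((n - p).choose (n - q) : 𝕜) *
        (Matrix.of fun i j : Fin p => (inner 𝕜 (v i) (v j) : 𝕜)).det := by
  have hgram : (Matrix.of fun i j : Fin p => (inner 𝕜 (v i) (v j) : 𝕜))
      = Matrix.of fun i j => ∑ k, inner 𝕜 (v i) (e k) * inner 𝕜 (e k) (v j) := by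
    ext i j
    simpa using ((OrthonormalBasis.mk he heX.ge).sum_inner_mul_inner (v i) (v j)).symm
  simp_rw [he.inner_orthogonalProjection_span_image]
  rw [hgram, Matrix.sum_powersetCard_det_of_sum_mul (fun k j => inner 𝕜 (e k) (v j))
    (fun k i => inner 𝕜 (v i) (e k)) (by simpa using hpq)]
  rw [Fintype.card_fin, Fintype.card_fin, ← Nat.choose_symm (by omega : q - p ≤ n - p),
    show n - p - (q - p) = n - q by omega]

/-- Let `e : Fin n → X` be an orthonormal basis of `X`, `v : Fin p → X` a
linearly independent family, and `p ≤ q ≤ n`.  Summing over all `q`-element subsets `I` of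
`Fin n`, with `W_I = span {e i : i ∈ I}`:
`∑_I det (Gram (P_{W_I} ∘ v)) = C(n-p, n-q) * det (Gram v)`.
Equivalently, for `V = span v`, `∑_I cos² Θ_{V,W_I} = C(n-p, n-q)`. -/
theorem sum_sq_cos_grassmann_coordinate_subspaces_higher_dim {n p q : ℕ} (e : Fin n → X)
    (he : Orthonormal 𝕜 e) (heX : Submodule.span 𝕜 (Set.range e) = ⊤)
    (v : Fin p → X) (hv : LinearIndependent 𝕜 v)
    (hpq : p ≤ q) (hqn : q ≤ n) :
    ∑ I ∈ Finset.powersetCard q (Finset.univ : Finset (Fin n)),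
        (Matrix.of fun i j : Fin p =>
          (inner 𝕜 ((Submodule.orthogonalProjection (Submodule.span 𝕜 (e '' ↑I)) (v i) : X))
                 ((Submodule.orthogonalProjection (Submodule.span 𝕜 (e '' ↑I)) (v j) : X)) : 𝕜)).det =
      ((n - p).choose (n - q) : 𝕜) *
        (Matrix.of fun i j : Fin p => (inner 𝕜 (v i) (v j) : 𝕜)).det :=
  sum_sq_cos_grassmann_coordinate_subspaces_higher_dim_general e he heX v hpq hqn
end

section
/- Let e : Fin n → X be an orthonormal basis of X, V ⊆ X a subspace of dimension p, P the orthogonal projection onto V, and q an integer with 1 ≤ q < p. Then ∑_{I ⊆ Fin n, |I| = q} det( (⟪P(e i), P(e j)⟫)_{i,j ∈ I} ) = C(p, q), where for each q-element subset I the determinant is that of the q×q Gram matrix of the family (P(e i))_{i ∈ I}, and C denotes the binomial coefficient. Equivalently, with W_I = span{e i : i ∈ I}, ∑_I cos²Θ_{W_I,V} = C(p, q). -/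
/-!
The sum of the `q × q` principal minors of a square matrix `M` is the coefficient of `t^q` in
`det (1 + t M)`. In orthonormal bases the Gram matrix of `P ∘ e` is `B A`, where `A` is the
matrix of `P : X → V` and `B` that of its adjoint, the inclusion `V → X`. Since `P` is a
coisometry, `A B = 1`, so the Weinstein–Aronszajn identity gives
`det (1 + t B A) = det (1 + t A B) = (1 + t) ^ p`, whose `t^q`-coefficient is `C(p, q)`.
-/

variable {𝕜 X : Type*} [RCLike 𝕜] [NormedAddCommGroup X] [InnerProductSpace 𝕜 X]
  [FiniteDimensional 𝕜 X]

namespace Matrix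

open Polynomial in
theorem sum_det_submatrix_powersetCard_of_mul_eq_one {R m n : Type*} [CommRing R] [Fintype m]
    [Fintype n] [DecidableEq m] [DecidableEq n] {A : Matrix m n R} {B : Matrix n m R}
    (hAB : A * B = 1) (k : ℕ) :
    ∑ s ∈ Finset.univ.powersetCard k, ((B * A).submatrix (Subtype.val : s → n) Subtype.val).det =
      (Fintype.card m).choose k := by
  rw [← coeff_det_one_add_X_smul_eq_sum_minors, Matrix.map_mul, ← Matrix.smul_mul,
    det_one_add_mul_comm, Matrix.mul_smul, ← Matrix.map_mul, hAB,
    Matrix.map_one _ (map_zero C) (map_one C), smul_one_eq_diagonal, ← diagonal_one,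
    diagonal_add, det_diagonal, Finset.prod_const, Finset.card_univ]
  exact coeff_one_add_X_pow R _ k

open LinearMap

variable {Y ι : Type*} [NormedAddCommGroup Y] [InnerProductSpace 𝕜 Y] [FiniteDimensional 𝕜 Y]
  [Fintype ι] [DecidableEq ι]

theorem gram_comp_eq_toMatrix_adjoint_comp (E : OrthonormalBasis ι 𝕜 X) (f : X →ₗ[𝕜] Y) :
    gram 𝕜 (f ∘ E) = toMatrix E.toBasis E.toBasis (adjoint f ∘ₗ f) := by
  ext i j
  simp [toMatrix_apply, E.repr_apply_apply, adjoint_inner_right]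

theorem sum_det_gram_powersetCard_of_comp_adjoint_eq_id (E : OrthonormalBasis ι 𝕜 X)
    {f : X →ₗ[𝕜] Y} (hf : f ∘ₗ adjoint f = LinearMap.id) (k : ℕ) :
    ∑ s ∈ Finset.univ.powersetCard k, (gram 𝕜 fun i : s => f (E i.1)).det =
      (Module.finrank 𝕜 Y).choose k := by
  let b := stdOrthonormalBasis 𝕜 Y
  have hAB : toMatrix E.toBasis b.toBasis f * toMatrix b.toBasis E.toBasis (adjoint f) = 1 := by
    rw [← toMatrix_comp, hf, toMatrix_id]
  rw [← Fintype.card_fin (Module.finrank 𝕜 Y), ← sum_det_submatrix_powersetCard_of_mul_eq_one hAB,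
    ← toMatrix_comp, ← gram_comp_eq_toMatrix_adjoint_comp]
  rfl

end Matrix

theorem Submodule.orthogonalProjectionOnto_comp_adjoint (V : Submodule 𝕜 X) :
    (V.orthogonalProjectionOnto : X →ₗ[𝕜] V) ∘ₗ
        LinearMap.adjoint (V.orthogonalProjectionOnto : X →ₗ[𝕜] V) = LinearMap.id := by
  ext y : 1
  refine ext_inner_left 𝕜 fun z => ?_
  simp [LinearMap.adjoint_inner_right]

theorem sum_sq_cos_grassmann_coordinate_subspaces_lower_dim_general {n p q : ℕ} (e : Fin n → X)
    (he : Orthonormal 𝕜 e) (heX : Submodule.span 𝕜 (Set.range e) = ⊤)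
    (V : Submodule 𝕜 X) (hV : Module.finrank 𝕜 V = p) :
    ∑ I ∈ Finset.powersetCard q (Finset.univ : Finset (Fin n)),
        (Matrix.of fun i j : ↥I =>
          (inner 𝕜 ((Submodule.orthogonalProjection V (e ↑i) : X))
                 ((Submodule.orthogonalProjection V (e ↑j) : X)) : 𝕜)).det =
      (p.choose q : 𝕜) := by
  have h := Matrix.sum_det_gram_powersetCard_of_comp_adjoint_eq_id (OrthonormalBasis.mk he heX.ge)
    V.orthogonalProjectionOnto_comp_adjoint q
  rw [OrthonormalBasis.coe_mk, hV] at h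
  exact h

/-- Let `e : Fin n → X` be an orthonormal basis of `X`, `V` a subspace of
dimension `p`, `P` the orthogonal projection onto `V`, and `1 ≤ q < p`.  Summing over all
`q`-element subsets `I` of `Fin n`:
`∑_I det ((⟪P (e i), P (e j)⟫)_{i,j ∈ I}) = C(p, q)`.
Equivalently, with `W_I = span {e i : i ∈ I}`, `∑_I cos² Θ_{W_I,V} = C(p, q)`. -/
theorem sum_sq_cos_grassmann_coordinate_subspaces_lower_dim {n p q : ℕ} (e : Fin n → X)
    (he : Orthonormal 𝕜 e) (heX : Submodule.span 𝕜 (Set.range e) = ⊤)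
    (V : Submodule 𝕜 X) (hV : Module.finrank 𝕜 V = p)
    (hq : 1 ≤ q) (hqp : q < p) :
    ∑ I ∈ Finset.powersetCard q (Finset.univ : Finset (Fin n)),
        (Matrix.of fun i j : ↥I =>
          (inner 𝕜 ((Submodule.orthogonalProjection V (e ↑i) : X))
                 ((Submodule.orthogonalProjection V (e ↑j) : X)) : 𝕜)).det =
      (p.choose q : 𝕜) :=
  sum_sq_cos_grassmann_coordinate_subspaces_lower_dim_general e he heX V hV
end

section
/- Let e : Fin n → X be an orthonormal basis of X and let v, w : Fin p → X be arbitrary families of vectors. Then det( (⟪v i, w j⟫)_{i,j} ) = ∑_{I ⊆ Fin n, |I| = p} conj( det( (⟪e k, v i⟫)_{k ∈ I, i ∈ Fin p} ) ) · det( (⟪e k, w j⟫)_{k ∈ I, j ∈ Fin p} ), where for each p-element subset I the rows are indexed by the increasing enumeration of I (the summand is independent of the chosen ordering of I). For unit blades this expresses the oriented Grassmann angle identity cos𝚯_{V,W} = ∑_I cos𝚯_{V,X_I} · cos𝚯_{W,X_I} over the coordinate p-subspaces X_I. -/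
/-!
The Gram determinant `det ⟪v i, w j⟫` is the pairing of the blades `v₁ ∧ ⋯ ∧ v_p` and
`w₁ ∧ ⋯ ∧ w_p`. The wedges `e_I` of an orthonormal basis form a basis of `⋀^p X` whose
coordinate functionals are the `p × p` minors `det ⟪e_{I k}, ·⟫`, so expanding the second blade
in this basis and pairing term by term gives the sum: this is the Cauchy–Binet formula.
-/

open Set.powersetCard in
theorem Module.Basis.det_eq_sum_det_mul_det {R M ι : Type*} [CommRing R] [AddCommGroup M]
    [Module R M] [LinearOrder ι] [Fintype ι] (b : Module.Basis ι R M) {p : ℕ}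
    (f : Fin p → Module.Dual R M) (w : Fin p → M) :
    (Matrix.of fun i j => f i (w j)).det =
      ∑ s : Set.powersetCard ι p,
        (Matrix.of fun i k => f i (b (ofFinEmbEquiv.symm s k))).det *
          (Matrix.of fun k j => b.coord (ofFinEmbEquiv.symm s k) (w j)).det := by
  have h := congrArg (exteriorPower.pairingDual R M p (exteriorPower.ιMulti R p f))
    ((b.exteriorPower p).sum_repr (exteriorPower.ιMulti R p w)).symm
  simp only [exteriorPower.pairingDual_ιMulti_ιMulti, map_sum, map_smul, smul_eq_mul,
    exteriorPower.basis_repr_apply, exteriorPower.ιMultiDual_apply_ιMulti,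
    exteriorPower.basis_apply, exteriorPower.ιMulti_family, Function.comp_apply] at h
  rw [← Matrix.det_transpose]
  refine h.trans (Finset.sum_congr rfl fun s _ => ?_)
  rw [mul_comm, ← Matrix.det_transpose, ← Matrix.det_transpose (Matrix.of _)]
  rfl

open Set.powersetCard in
theorem OrthonormalBasis.det_inner_eq_sum_conj_det_mul_det {𝕜 E ι : Type*} [RCLike 𝕜]
    [NormedAddCommGroup E] [InnerProductSpace 𝕜 E] [LinearOrder ι] [Fintype ι]
    (b : OrthonormalBasis ι 𝕜 E) {p : ℕ} (v w : Fin p → E) :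
    (Matrix.of fun i j => inner 𝕜 (v i) (w j)).det =
      ∑ s : Set.powersetCard ι p,
        starRingEnd 𝕜 (Matrix.of fun k i => inner 𝕜 (b (ofFinEmbEquiv.symm s k)) (v i)).det *
          (Matrix.of fun k j => inner 𝕜 (b (ofFinEmbEquiv.symm s k)) (w j)).det := by
  refine (b.toBasis.det_eq_sum_det_mul_det (fun i => innerₛₗ 𝕜 (v i)) w).trans
    (Finset.sum_congr rfl fun s _ => ?_)
  rw [RingHom.map_det, ← Matrix.det_transpose]
  congr 2 <;> ext <;> simp [b.repr_apply_apply]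

variable {𝕜 X : Type*} [RCLike 𝕜] [NormedAddCommGroup X] [InnerProductSpace 𝕜 X]
  [FiniteDimensional 𝕜 X]

/-- Let `e : Fin n → X` be an orthonormal basis of `X` and `v, w : Fin p → X`
arbitrary families.  Then
`det (⟪v i, w j⟫) = ∑_{I, |I| = p} conj (det (⟪e k, v i⟫)_{k ∈ I, i}) * det (⟪e k, w j⟫)_{k ∈ I, j}`,
rows indexed by the increasing enumeration of each `p`-element subset `I` of `Fin n`.
For unit blades this is the oriented identity `cos 𝚯_{V,W} = ∑_I cos 𝚯_{V,X_I} cos 𝚯_{W,X_I}`. -/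
theorem oriented_grassmann_angle_coordinate_expansion {n p : ℕ} (e : Fin n → X)
    (he : Orthonormal 𝕜 e) (heX : Submodule.span 𝕜 (Set.range e) = ⊤)
    (v w : Fin p → X) :
    (Matrix.of fun i j : Fin p => (inner 𝕜 (v i) (w j) : 𝕜)).det =
      ∑ I ∈ (Finset.powersetCard p (Finset.univ : Finset (Fin n))).attach,
        (starRingEnd 𝕜) ((Matrix.of fun k i : Fin p =>
            (inner 𝕜 (e ((I.1.orderIsoOfFin (Finset.mem_powersetCard_univ.mp I.2) k : Fin n)))
              (v i) : 𝕜)).det) *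
          (Matrix.of fun k j : Fin p =>
            (inner 𝕜 (e ((I.1.orderIsoOfFin (Finset.mem_powersetCard_univ.mp I.2) k : Fin n)))
              (w j) : 𝕜)).det := by
  let b : OrthonormalBasis (Fin n) 𝕜 X := OrthonormalBasis.mk he heX.ge
  have hb : ⇑b = e := OrthonormalBasis.coe_mk he heX.ge
  rw [b.det_inner_eq_sum_conj_det_mul_det, hb]
  exact Finset.sum_equiv (Equiv.subtypeEquivRight fun _ => Finset.mem_powersetCard_univ.symm)
    (by simp) fun _ _ => rfl
end

section
/- Let e : Fin n → X be an orthonormal basis of X and let v, w : Fin p → X be orthonormal families spanning subspaces V and W. Then |det( (⟪v i, w j⟫)_{i,j} )| ≤ ∑_{I ⊆ Fin n, |I| = p} |det( (⟪e k, v i⟫)_{k ∈ I, i} )| · |det( (⟪e k, w j⟫)_{k ∈ I, j} )|, where rows are indexed by the increasing enumeration of each p-element subset I. Equivalently, cosΘ_{V,W} ≤ ∑_I cosΘ_{V,X_I} · cosΘ_{W,X_I} over the coordinate p-subspaces X_I of the basis. -/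
/-!
Parseval's identity in the basis `e` writes the Gram matrix `(⟪v i, w j⟫)` as the product of the
`p × n` matrix `(⟪v i, e k⟫)` and the `n × p` matrix `(⟪e k, w j⟫)`. The Cauchy–Binet formula
expands the determinant of this product as a sum over `p`-subsets `I` of products of `p × p`
minors; the first minor is the conjugate transpose of `(⟪e k, v i⟫)_{k ∈ I}`, so the triangle
inequality gives the bound.
-/

open Equiv Finset Function Matrix

/-- An injective map `Fin p → ι` is, uniquely, the increasing enumeration of its image
precomposed with a permutation. -/
theorem Finset.sum_injective_eq_sum_powersetCard_sum_perm {ι M : Type*} [Fintype ι]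
    [LinearOrder ι] [AddCommMonoid M] {p : ℕ} (F : (Fin p → ι) → M) :
    ∑ f : Fin p → ι with Injective f, F f =
      ∑ I ∈ (powersetCard p (univ : Finset ι)).attach, ∑ π : Perm (Fin p),
        F (I.1.orderEmbOfFin (mem_powersetCard_univ.mp I.2) ∘ π) := by
  rw [sum_sigma']
  symm
  refine sum_bij (fun q _ => q.1.1.orderEmbOfFin (mem_powersetCard_univ.mp q.1.2) ∘ q.2)
    (fun q _ => ?_) (fun q _ q' _ h => ?_) (fun f hf => ?_) (fun _ _ => rfl)
  · simpa using (RelEmbedding.injective _).comp q.2.injective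
  · obtain ⟨⟨I, _⟩, π⟩ := q
    obtain ⟨⟨I', _⟩, π'⟩ := q'
    have hrange := congrArg Set.range h
    simp only [EquivLike.range_comp, range_orderEmbOfFin, coe_inj] at hrange
    subst hrange
    congr
    exact Equiv.ext fun k => (RelEmbedding.injective _) (congrFun h k)
  · have hf : Injective f := by simpa using hf
    have hcard : (univ.image f).card = p := by simp [card_image_of_injective _ hf]
    let g := (univ.image f).orderIsoOfFin hcard
    have hmem (k : Fin p) : f k ∈ univ.image f := mem_image_of_mem f (mem_univ k)
    have hbij : Bijective fun k => g.symm ⟨f k, hmem k⟩ :=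
      (Fintype.bijective_iff_injective_and_card _).mpr
        ⟨g.symm.injective.comp fun a b hab => hf (congrArg Subtype.val hab), rfl⟩
    refine ⟨⟨⟨_, mem_powersetCard_univ.mpr hcard⟩, .ofBijective _ hbij⟩, by simp, ?_⟩
    funext k
    simp [← coe_orderIsoOfFin_apply, g]

namespace Matrix

variable {R ι : Type*} [CommRing R] [Fintype ι]

theorem det_mul_eq_sum_det_submatrix_mul_prod {m : Type*} [Fintype m] [DecidableEq m]
    (A : Matrix m ι R) (B : Matrix ι m R) :
    (A * B).det = ∑ f : m → ι, (A.submatrix id f).det * ∏ i, B (f i) i := by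
  simp only [det_apply', mul_apply, prod_univ_sum, mul_sum, sum_mul, Fintype.piFinset_univ]
  rw [sum_comm]
  refine sum_congr rfl fun f _ => sum_congr rfl fun σ _ => ?_
  simp only [submatrix_apply, id, prod_mul_distrib, mul_assoc]

theorem det_mul_eq_sum_powersetCard [LinearOrder ι] {p : ℕ}
    (A : Matrix (Fin p) ι R) (B : Matrix ι (Fin p) R) :
    (A * B).det = ∑ I ∈ (powersetCard p (univ : Finset ι)).attach,
      (A.submatrix id (I.1.orderEmbOfFin (mem_powersetCard_univ.mp I.2))).det *
        (B.submatrix (I.1.orderEmbOfFin (mem_powersetCard_univ.mp I.2)) id).det := by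
  have hinj (f : Fin p → ι) (hf : (A.submatrix id f).det * ∏ i, B (f i) i ≠ 0) :
      Injective f := by
    by_contra hf'
    obtain ⟨i, j, hfij, hij⟩ := not_injective_iff.mp hf'
    exact hf <| by rw [det_zero_of_column_eq hij fun k => by simp [hfij], zero_mul]
  rw [det_mul_eq_sum_det_submatrix_mul_prod, ← sum_filter_of_ne fun f _ => hinj f,
    sum_injective_eq_sum_powersetCard_sum_perm]
  refine sum_congr rfl fun I _ => ?_
  set g := I.1.orderEmbOfFin (mem_powersetCard_univ.mp I.2)
  rw [det_apply' (B.submatrix g id), mul_sum]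
  refine sum_congr rfl fun π _ => ?_
  have hperm : A.submatrix id (g ∘ π) = (A.submatrix id g).submatrix id π := rfl
  rw [hperm, det_permute', mul_assoc, mul_left_comm]
  rfl

end Matrix

variable {𝕜 X : Type*} [RCLike 𝕜] [NormedAddCommGroup X] [InnerProductSpace 𝕜 X]
  [FiniteDimensional 𝕜 X]

theorem grassmann_angle_coordinate_inequality_general {n p : ℕ} (e : Fin n → X)
    (he : Orthonormal 𝕜 e) (heX : Submodule.span 𝕜 (Set.range e) = ⊤)
    (v w : Fin p → X) :
    ‖(Matrix.of fun i j : Fin p => (inner 𝕜 (v i) (w j) : 𝕜)).det‖ ≤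
      ∑ I ∈ (Finset.powersetCard p (Finset.univ : Finset (Fin n))).attach,
        ‖(Matrix.of fun k i : Fin p =>
            (inner 𝕜 (e ((I.1.orderIsoOfFin (Finset.mem_powersetCard_univ.mp I.2) k : Fin n)))
              (v i) : 𝕜)).det‖ *
          ‖(Matrix.of fun k j : Fin p =>
            (inner 𝕜 (e ((I.1.orderIsoOfFin (Finset.mem_powersetCard_univ.mp I.2) k : Fin n)))
              (w j) : 𝕜)).det‖ := by
  have parseval : (of fun i j => inner 𝕜 (v i) (w j)) =
      (of fun i k => inner 𝕜 (v i) (e k)) * of fun k j => inner 𝕜 (e k) (w j) := by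
    ext i j
    simp [mul_apply, ← (OrthonormalBasis.mk he heX.ge).sum_inner_mul_inner (v i) (w j)]
  rw [parseval, det_mul_eq_sum_powersetCard]
  refine (norm_sum_le _ _).trans_eq (sum_congr rfl fun I _ => ?_)
  rw [norm_mul, ← norm_star, ← det_conjTranspose]
  congr 3
  ext k i
  simp

/-- Let `e : Fin n → X` be an orthonormal basis of `X` and `v, w : Fin p → X`
orthonormal families spanning `V` and `W`.  Then
`|det (⟪v i, w j⟫)| ≤ ∑_{I, |I| = p} |det (⟪e k, v i⟫)_{k ∈ I, i}| * |det (⟪e k, w j⟫)_{k ∈ I, j}|`,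
rows indexed by the increasing enumeration of each `p`-element subset `I`.
Equivalently, `cos Θ_{V,W} ≤ ∑_I cos Θ_{V,X_I} cos Θ_{W,X_I}`. -/
theorem grassmann_angle_coordinate_inequality {n p : ℕ} (e : Fin n → X)
    (he : Orthonormal 𝕜 e) (heX : Submodule.span 𝕜 (Set.range e) = ⊤)
    (V W : Submodule 𝕜 X) (v w : Fin p → X)
    (hv : Orthonormal 𝕜 v) (hvV : Submodule.span 𝕜 (Set.range v) = V)
    (hw : Orthonormal 𝕜 w) (hwW : Submodule.span 𝕜 (Set.range w) = W) :
    ‖(Matrix.of fun i j : Fin p => (inner 𝕜 (v i) (w j) : 𝕜)).det‖ ≤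
      ∑ I ∈ (Finset.powersetCard p (Finset.univ : Finset (Fin n))).attach,
        ‖(Matrix.of fun k i : Fin p =>
            (inner 𝕜 (e ((I.1.orderIsoOfFin (Finset.mem_powersetCard_univ.mp I.2) k : Fin n)))
              (v i) : 𝕜)).det‖ *
          ‖(Matrix.of fun k j : Fin p =>
            (inner 𝕜 (e ((I.1.orderIsoOfFin (Finset.mem_powersetCard_univ.mp I.2) k : Fin n)))
              (w j) : 𝕜)).det‖ :=
  grassmann_angle_coordinate_inequality_general e he heX v w
end

section
/- Let V and W be nonzero subspaces of X and let U ⊆ V be a subspace with U ⊥ W (every vector of U is orthogonal to every vector of W). Then U is a principal subspace of V with respect to W: there exist associated principal bases e : Fin p → X of V and f : Fin q → X of W, and a subset S ⊆ Fin p, such that U = span{e i : i ∈ S}. -/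
variable {𝕜 X : Type*} [RCLike 𝕜] [NormedAddCommGroup X] [InnerProductSpace 𝕜 X]
  [FiniteDimensional 𝕜 X]

/-- Orthonormal families `e` spanning `V` and `f` spanning `W` are *associated principal bases*
of `V` and `W`: `⟪e i, f j⟫ = 0` whenever `i ≠ j`, and each `⟪e i, f i⟫` is a nonnegative real. -/
def IsPrincipalPair {𝕜 X : Type*} [RCLike 𝕜] [NormedAddCommGroup X] [InnerProductSpace 𝕜 X]
    {p q : ℕ} (V W : Submodule 𝕜 X) (e : Fin p → X) (f : Fin q → X) : Prop :=
  Orthonormal 𝕜 e ∧ Submodule.span 𝕜 (Set.range e) = V ∧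
  Orthonormal 𝕜 f ∧ Submodule.span 𝕜 (Set.range f) = W ∧
  (∀ (i : Fin p) (j : Fin q), (i : ℕ) ≠ (j : ℕ) → (inner 𝕜 (e i) (f j) : 𝕜) = 0) ∧
  (∀ (i : Fin p) (j : Fin q), (i : ℕ) = (j : ℕ) →
    ∃ c : ℝ, 0 ≤ c ∧ (inner 𝕜 (e i) (f j) : 𝕜) = (c : 𝕜))

/-! Let `T : V → W` be the orthogonal projection onto `W` restricted to `V`, so that
`⟪v, w⟫ = ⟪T v, w⟫` for `v ∈ V`, `w ∈ W`. Associated principal bases are then singular bases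
of `T`: an eigenbasis `b` of `T†T` on `(ker T)ᗮ` is mapped by `T` to pairwise orthogonal nonzero
vectors `σᵢ fᵢ` with `σᵢ = ‖T bᵢ‖` and `fᵢ` orthonormal. Completing `b` by an orthonormal basis
of `ker T`, and `f` by one of its orthogonal complement in `W`, gives associated principal bases.
Since `U ⊥ W` means `U ⊆ ker T`, the basis of `ker T` can be chosen to extend one of `U`. -/

open Set Submodule
open LinearMap (ker)
open scoped InnerProductSpace

theorem Fin.range_append {α : Type*} {m n : ℕ} (v : Fin m → α) (w : Fin n → α) :
    range (Fin.append v w) = range v ∪ range w := by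
  ext x
  simp only [mem_range, mem_union]
  constructor
  · rintro ⟨i, rfl⟩
    induction i using Fin.addCases with
    | left i => exact Or.inl ⟨i, (Fin.append_left v w i).symm⟩
    | right i => exact Or.inr ⟨i, (Fin.append_right v w i).symm⟩
  · rintro (⟨i, rfl⟩ | ⟨i, rfl⟩)
    · exact ⟨Fin.castAdd n i, Fin.append_left v w i⟩
    · exact ⟨Fin.natAdd m i, Fin.append_right v w i⟩

section Orthonormal

variable {E : Type*} [NormedAddCommGroup E] [InnerProductSpace 𝕜 E]

theorem Orthonormal.fin_append {m n : ℕ} {v : Fin m → E} {w : Fin n → E}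
    (hv : Orthonormal 𝕜 v) (hw : Orthonormal 𝕜 w) (hvw : ∀ i j, ⟪v i, w j⟫_𝕜 = 0) :
    Orthonormal 𝕜 (Fin.append v w) := by
  have hwv : ∀ i j, ⟪w i, v j⟫_𝕜 = 0 := fun i j => inner_eq_zero_symm.mp (hvw j i)
  rw [orthonormal_iff_ite] at hv hw ⊢
  simp only [Fin.ext_iff, Fin.forall_fin_add, Fin.append_left, Fin.val_castAdd, Fin.append_right,
    Fin.val_natAdd, hv, implies_true, hvw, right_eq_ite_iff, zero_ne_one, imp_false, true_and, hwv,
    hw, Nat.add_left_cancel_iff, and_true]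
  constructor <;> intros <;> omega

theorem orthonormal_inv_norm_smul {ι : Type*} {g : ι → E} (hg : ∀ i, g i ≠ 0)
    (hg_pair : Pairwise fun i j => ⟪g i, g j⟫_𝕜 = 0) :
    Orthonormal 𝕜 fun i => (‖g i‖⁻¹ : 𝕜) • g i :=
  ⟨fun i => norm_smul_inv_norm (hg i), fun i j hij => by
    dsimp only
    rw [inner_smul_left, inner_smul_right, hg_pair hij, mul_zero, mul_zero]⟩

theorem Submodule.span_range_coe_eq {ι : Type*} {K : Submodule 𝕜 E} {v : ι → K}
    (hv : span 𝕜 (range v) = ⊤) : span 𝕜 (range (K.subtype ∘ v)) = K := by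
  rw [range_comp, span_image, hv, map_subtype_top]

variable [FiniteDimensional 𝕜 E]

theorem Submodule.exists_orthonormal_fin_span_eq (K : Submodule 𝕜 E) :
    ∃ (n : ℕ) (v : Fin n → E), Orthonormal 𝕜 v ∧ span 𝕜 (range v) = K :=
  let b := stdOrthonormalBasis 𝕜 K
  ⟨_, K.subtype ∘ b, b.orthonormal.comp_linearIsometry K.subtypeₗᵢ,
    span_range_coe_eq b.toBasis.span_eq⟩

theorem Orthonormal.exists_fin_append_span_eq {n : ℕ} {v : Fin n → E} (hv : Orthonormal 𝕜 v)
    {K : Submodule 𝕜 E} (hvK : span 𝕜 (range v) ≤ K) :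
    ∃ (m : ℕ) (w : Fin m → E), (∀ i j, ⟪v i, w j⟫_𝕜 = 0) ∧
      Orthonormal 𝕜 (Fin.append v w) ∧ span 𝕜 (range (Fin.append v w)) = K := by
  obtain ⟨m, w, hw, hw_span⟩ := ((span 𝕜 (range v))ᗮ ⊓ K).exists_orthonormal_fin_span_eq
  have hvw : ∀ i j, ⟪v i, w j⟫_𝕜 = 0 := fun i j =>
    inner_right_of_mem_orthogonal (subset_span (mem_range_self i))
      (mem_inf.mp (hw_span ▸ subset_span (mem_range_self j) : w j ∈ _)).1
  refine ⟨m, w, hvw, hv.fin_append hw hvw, ?_⟩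
  rw [Fin.range_append, span_union, hw_span, sup_orthogonal_inf_of_hasOrthogonalProjection hvK]

theorem Submodule.exists_orthonormal_fin_span_eq_of_le {U K : Submodule 𝕜 E} (hUK : U ≤ K) :
    ∃ (n : ℕ) (v : Fin n → E) (S : Set (Fin n)),
      Orthonormal 𝕜 v ∧ span 𝕜 (range v) = K ∧ span 𝕜 (v '' S) = U := by
  obtain ⟨k, u, hu, rfl⟩ := U.exists_orthonormal_fin_span_eq
  obtain ⟨m, w, -, huw, huw_span⟩ := hu.exists_fin_append_span_eq hUK
  refine ⟨k + m, Fin.append u w, range (Fin.castAdd m), huw, huw_span, ?_⟩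
  rw [← range_comp, show Fin.append u w ∘ Fin.castAdd m = u from funext (Fin.append_left u w)]

end Orthonormal

def IsNonnegDiagonal {p q : ℕ} (M : Fin p → Fin q → 𝕜) : Prop :=
  (∀ (i : Fin p) (j : Fin q), (i : ℕ) ≠ j → M i j = 0) ∧
    ∀ (i : Fin p) (j : Fin q), (i : ℕ) = j → ∃ c : ℝ, 0 ≤ c ∧ M i j = c

theorem IsNonnegDiagonal.of_blocks {r r' s t : ℕ} {M : Fin (r + s) → Fin (r' + t) → 𝕜}
    (h : IsNonnegDiagonal fun i j => M (Fin.castAdd s i) (Fin.castAdd t j))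
    (h₁ : ∀ i j, M (Fin.castAdd s i) (Fin.natAdd r' j) = 0)
    (h₂ : ∀ i j, M (Fin.natAdd r i) j = 0) : IsNonnegDiagonal M := by
  refine ⟨fun i j hij => ?_, fun i j hij => ?_⟩
  · induction i using Fin.addCases with
    | left i =>
      induction j using Fin.addCases with
      | left j => exact h.1 i j hij
      | right j => exact h₁ i j
    | right i => exact h₂ i j
  · induction i using Fin.addCases with
    | left i =>
      induction j using Fin.addCases with
      | left j => exact h.2 i j hij
      | right j => exact ⟨0, le_rfl, by rw [h₁, RCLike.ofReal_zero]⟩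
    | right i => exact ⟨0, le_rfl, by rw [h₂, RCLike.ofReal_zero]⟩

section SingularPairs

variable {E F : Type*} [NormedAddCommGroup E] [InnerProductSpace 𝕜 E] [FiniteDimensional 𝕜 E]
  [NormedAddCommGroup F] [InnerProductSpace 𝕜 F] [FiniteDimensional 𝕜 F] (T : E →ₗ[𝕜] F)

theorem LinearMap.exists_orthonormalBasis_pairwise_inner_map_eq_zero :
    ∃ b : OrthonormalBasis (Fin (Module.finrank 𝕜 E)) 𝕜 E,
      Pairwise fun i j => ⟪T (b i), T (b j)⟫_𝕜 = 0 := by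
  have hA := T.isSymmetric_adjoint_comp_self
  refine ⟨hA.eigenvectorBasis rfl, fun i j hij => ?_⟩
  dsimp only
  rw [← LinearMap.adjoint_inner_right, ← LinearMap.comp_apply, hA.apply_eigenvectorBasis,
    inner_smul_right, (hA.eigenvectorBasis rfl).orthonormal.2 hij, mul_zero]

theorem LinearMap.exists_singular_pairs :
    ∃ (r : ℕ) (b : Fin r → E) (f : Fin r → F) (σ : Fin r → ℝ),
      Orthonormal 𝕜 b ∧ span 𝕜 (Set.range b) = (ker T)ᗮ ∧ Orthonormal 𝕜 f ∧ (∀ i, 0 ≤ σ i) ∧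
      ∀ i, T (b i) = (σ i : 𝕜) • f i := by
  set K := (ker T)ᗮ
  obtain ⟨b, hb⟩ := (T ∘ₗ K.subtype).exists_orthonormalBasis_pairwise_inner_map_eq_zero
  have hTb : ∀ i, T (b i) ≠ 0 := fun i hi => by
    have h : (b i : E) ∈ ker T ⊓ K := ⟨hi, (b i).2⟩
    rw [inf_orthogonal_eq_bot, mem_bot] at h
    exact b.orthonormal.ne_zero i (Subtype.ext h)
  refine ⟨_, K.subtype ∘ b, fun i => (‖T (b i)‖⁻¹ : 𝕜) • T (b i), fun i => ‖T (b i)‖,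
    b.orthonormal.comp_linearIsometry K.subtypeₗᵢ, span_range_coe_eq b.toBasis.span_eq,
    orthonormal_inv_norm_smul hTb hb, fun i => norm_nonneg _, fun i => ?_⟩
  rw [smul_smul, mul_inv_cancel₀ (by simpa using hTb i), one_smul]
  rfl

theorem LinearMap.exists_principal_bases_of_le_ker {U : Submodule 𝕜 E} (hU : U ≤ ker T) :
    ∃ (p q : ℕ) (e : Fin p → E) (f : Fin q → F) (S : Set (Fin p)),
      Orthonormal 𝕜 e ∧ span 𝕜 (Set.range e) = ⊤ ∧ Orthonormal 𝕜 f ∧ span 𝕜 (Set.range f) = ⊤ ∧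
      IsNonnegDiagonal (fun i j => ⟪T (e i), f j⟫_𝕜) ∧ span 𝕜 (e '' S) = U := by
  obtain ⟨r, b, f, σ, hb, hb_span, hf, hσ, hTb⟩ := T.exists_singular_pairs
  obtain ⟨s, c, S, hc, hc_span, hcU⟩ := exists_orthonormal_fin_span_eq_of_le hU
  obtain ⟨t, g, hfg, hfg_orth, hfg_span⟩ := hf.exists_fin_append_span_eq le_top
  have hb_mem : ∀ i, b i ∈ (ker T)ᗮ := fun i => hb_span ▸ subset_span (Set.mem_range_self i)
  have hc_mem : ∀ i, c i ∈ ker T := fun i => hc_span ▸ subset_span (Set.mem_range_self i)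
  refine ⟨r + s, r + t, Fin.append b c, Fin.append f g, Fin.natAdd r '' S,
    hb.fin_append hc fun i j => inner_left_of_mem_orthogonal (hc_mem j) (hb_mem i), ?_,
    hfg_orth, hfg_span, ?_, ?_⟩
  · rw [Fin.range_append, span_union, hb_span, hc_span, sup_comm,
      sup_orthogonal_of_hasOrthogonalProjection]
  · refine IsNonnegDiagonal.of_blocks ⟨fun i j hij => ?_, fun i j hij => ?_⟩ (fun i j => ?_)
      (fun i j => ?_) <;> simp only [Fin.append_left, Fin.append_right]
    · rw [hTb, inner_smul_left, hf.inner_eq_zero (Fin.ne_of_val_ne hij), mul_zero]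
    · obtain rfl := Fin.ext hij
      refine ⟨σ i, hσ i, ?_⟩
      rw [hTb, inner_smul_left, inner_self_eq_norm_sq_to_K, hf.norm_eq_one]
      simp
    · rw [hTb, inner_smul_left, hfg, mul_zero]
    · rw [LinearMap.mem_ker.mp (hc_mem i), inner_zero_left]
  · rw [image_image]
    simpa only [Fin.append_right] using hcU

end SingularPairs

theorem orthogonal_subspace_is_principal_general (V W : Submodule 𝕜 X)
    (U : Submodule 𝕜 X) (hUV : U ≤ V)
    (hUW : ∀ u ∈ U, ∀ w ∈ W, (inner 𝕜 u w : 𝕜) = 0) :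
    ∃ (p q : ℕ) (e : Fin p → X) (f : Fin q → X) (S : Set (Fin p)),
      IsPrincipalPair V W e f ∧ U = Submodule.span 𝕜 (e '' S) := by
  let T : V →ₗ[𝕜] W := W.orthogonalProjectionOnto.toLinearMap ∘ₗ V.subtype
  have hT : ∀ (v : V) (w : W), ⟪(v : X), (w : X)⟫_𝕜 = ⟪T v, w⟫_𝕜 := fun v w =>
    (inner_orthogonalProjectionOnto_eq_of_mem_right w v).symm
  have hUT : U.comap V.subtype ≤ ker T := fun u hu =>
    (orthogonalProjectionOnto_eq_zero_iff (K := W)).mpr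
      ((mem_orthogonal' W _).mpr fun w hw => hUW u hu w hw)
  obtain ⟨p, q, e, f, S, he, he_span, hf, hf_span, hef, hU⟩ :=
    T.exists_principal_bases_of_le_ker hUT
  have hef' : IsNonnegDiagonal fun i j => ⟪(e i : X), (f j : X)⟫_𝕜 := by
    simpa only [hT] using hef
  refine ⟨p, q, V.subtype ∘ e, W.subtype ∘ f, S,
    ⟨he.comp_linearIsometry V.subtypeₗᵢ, span_range_coe_eq he_span,
      hf.comp_linearIsometry W.subtypeₗᵢ, span_range_coe_eq hf_span, hef'⟩, ?_⟩
  rw [image_comp, span_image, hU, map_comap_subtype, inf_eq_right.mpr hUV]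

/-- If `V, W` are nonzero subspaces and `U ⊆ V` satisfies `U ⊥ W`, then `U` is
a principal subspace of `V` with respect to `W`: it is spanned by a subset of a principal basis
of `V` associated to a principal basis of `W`. -/
theorem orthogonal_subspace_is_principal (V W : Submodule 𝕜 X) (hV : V ≠ ⊥) (hW : W ≠ ⊥)
    (U : Submodule 𝕜 X) (hUV : U ≤ V)
    (hUW : ∀ u ∈ U, ∀ w ∈ W, (inner 𝕜 u w : 𝕜) = 0) :
    ∃ (p q : ℕ) (e : Fin p → X) (f : Fin q → X) (S : Set (Fin p)),
      IsPrincipalPair V W e f ∧ U = Submodule.span 𝕜 (e '' S) :=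
  orthogonal_subspace_is_principal_general V W U hUV hUW
end

section
/- Let e : Fin p → X and f : Fin q → X be associated principal bases of nonzero subspaces V and W, let P be the orthogonal projection onto W, and let S, T ⊆ Fin p be distinct subsets with |S| = |T| = r. Set V₁ = span{e i : i ∈ S} and V₂ = span{e i : i ∈ T}. Then for every family a : Fin r → X with all values in V₁ and every family b : Fin r → X with all values in V₂, both det( (⟪a i, b j⟫)_{i,j} ) = 0 and det( (⟪P(a i), P(b j)⟫)_{i,j} ) = 0. -/
/-!
If the vectors `e k` are pairwise orthogonal for a sesquilinear form `B`, then for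
`x = ∑_{s ∈ S} α s • e s` and `y = ∑_{t ∈ T} β t • e t` only the diagonal terms survive:
`B x y = ∑_{k ∈ S ∩ T} σ (α k) * B (e k) (e k) * β k`. Hence the matrix `(B (a i) (b j))` factors
through `S ∩ T`, which has fewer than `r` elements when `S ≠ T` and `|S| = |T| = r`, so its
determinant vanishes. This applies to the inner product, and also to `(x, y) ↦ ⟪P x, P y⟫`:
by Parseval in `W`, `⟪P e s, P e t⟫ = ∑ j, ⟪e s, f j⟫ * ⟪f j, e t⟫`, and for principal bases
every term vanishes unless `j = s = t`.
-/

variable {𝕜 X : Type*} [RCLike 𝕜] [NormedAddCommGroup X] [InnerProductSpace 𝕜 X]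
  [FiniteDimensional 𝕜 X]

open Finset Submodule
open scoped InnerProductSpace

theorem Finset.card_inter_lt_of_ne_of_card_eq {α : Type*} [DecidableEq α] {S T : Finset α}
    (hST : S ≠ T) (hcard : #S = #T) : #(S ∩ T) < #S :=
  card_lt_card <| ssubset_iff_subset_ne.2 ⟨inter_subset_left, fun h =>
    hST <| eq_of_subset_of_card_le (inter_eq_left.1 h) hcard.ge⟩

theorem Matrix.det_mul_eq_zero_of_card_lt {R m n : Type*} [CommRing R] [IsDomain R]
    [Fintype m] [DecidableEq m] [Fintype n] (A : Matrix m n R) (B : Matrix n m R)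
    (h : Fintype.card n < Fintype.card m) : (A * B).det = 0 := by
  by_contra hdet
  have := (rank_of_det_ne_zero hdet).symm.trans_le
    ((rank_mul_le_right A B).trans (rank_le_card_height B))
  omega

namespace LinearMap.IsOrthoᵢ

variable {R M ι : Type*} [CommRing R] [AddCommGroup M] [Module R M] {σ : R →+* R}
  {B : M →ₛₗ[σ] M →ₗ[R] R} {e : ι → M}

theorem apply_sum_smul_sum_smul [DecidableEq ι] (hB : B.IsOrthoᵢ e) (S T : Finset ι)
    (α β : ι → R) :
    B (∑ s ∈ S, α s • e s) (∑ t ∈ T, β t • e t) =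
      ∑ k ∈ S ∩ T, σ (α k) * B (e k) (e k) * β k := by
  simp only [map_sum, map_smulₛₗ, LinearMap.sum_apply, LinearMap.smul_apply, smul_eq_mul,
    RingHom.id_apply]
  rw [inter_comm, ← sum_ite_mem T S]
  refine sum_congr rfl fun t _ => ?_
  split_ifs with ht
  · rw [sum_eq_single_of_mem t ht fun s _ hst => by rw [isOrthoᵢ_def.1 hB s t hst, mul_zero]]
    ring
  · rw [sum_eq_zero fun s hs => by rw [isOrthoᵢ_def.1 hB s t (ne_of_mem_of_not_mem hs ht),
      mul_zero], mul_zero]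

theorem det_eq_zero_of_mem_span [DecidableEq ι] [IsDomain R] {n : Type*} [Fintype n]
    [DecidableEq n] (hB : B.IsOrthoᵢ e) {S T : Finset ι} (hcard : #(S ∩ T) < Fintype.card n)
    {a b : n → M}
    (ha : ∀ i, a i ∈ span R (e '' S)) (hb : ∀ j, b j ∈ span R (e '' T)) :
    (Matrix.of fun i j => B (a i) (b j)).det = 0 := by
  choose α hα using fun i => (mem_span_image_finset_iff_exists_fun' R).1 (ha i)
  choose β hβ using fun j => (mem_span_image_finset_iff_exists_fun' R).1 (hb j)
  have hfactor : (Matrix.of fun i j => B (a i) (b j)) =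
      (Matrix.of fun i (k : ↥(S ∩ T)) => σ (α i k) * B (e k) (e k)) *
        Matrix.of fun (k : ↥(S ∩ T)) j => β j k := by
    ext i j
    rw [Matrix.of_apply, ← hα i, ← hβ j, hB.apply_sum_smul_sum_smul, Matrix.mul_apply,
      ← sum_coe_sort]
    rfl
  rw [hfactor]
  exact Matrix.det_mul_eq_zero_of_card_lt _ _ (by simpa using hcard)

end LinearMap.IsOrthoᵢ

section InnerProductSpace

variable {E : Type*} [NormedAddCommGroup E] [InnerProductSpace 𝕜 E]

theorem Orthonormal.isOrthoᵢ_innerₛₗ {ι : Type*} {e : ι → E} (he : Orthonormal 𝕜 e) :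
    (innerₛₗ 𝕜 (E := E)).IsOrthoᵢ e :=
  he.2

theorem Orthonormal.inner_orthogonalProjectionOnto_eq_sum {ι : Type*} [Fintype ι] {f : ι → E}
    (hf : Orthonormal 𝕜 f) {W : Submodule 𝕜 E} [W.HasOrthogonalProjection]
    (hW : span 𝕜 (Set.range f) = W) (x y : E) :
    ⟪W.orthogonalProjectionOnto x, W.orthogonalProjectionOnto y⟫_𝕜 =
      ∑ j, ⟪x, f j⟫_𝕜 * ⟪f j, y⟫_𝕜 := by
  subst hW
  let b := (Module.Basis.span hf.linearIndependent).toOrthonormalBasis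
    (by
      rw [show ⇑(Module.Basis.span hf.linearIndependent) = _ from
        funext (Module.Basis.span_apply hf.linearIndependent)]
      exact orthonormal_span hf)
  rw [← b.sum_inner_mul_inner]
  refine sum_congr rfl fun j _ => ?_
  have hbj : (b j : E) = f j := by simp [b, Module.Basis.span_apply]
  rw [inner_orthogonalProjectionOnto_eq_of_mem_right,
    inner_orthogonalProjectionOnto_eq_of_mem_left, hbj]

theorem IsPrincipalPair.isOrthoᵢ_inner_orthogonalProjectionOnto {p q : ℕ}
    {V W : Submodule 𝕜 E} [W.HasOrthogonalProjection] {e : Fin p → E} {f : Fin q → E}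
    (hef : IsPrincipalPair V W e f) :
    (((innerₛₗ 𝕜 (E := W)).comp W.orthogonalProjectionOnto.toLinearMap).compl₂
      W.orthogonalProjectionOnto.toLinearMap).IsOrthoᵢ e := by
  obtain ⟨-, -, hf, hW, hcross, -⟩ := hef
  intro s t hst
  simp only [Function.onFun, LinearMap.compl₂_apply, LinearMap.comp_apply,
    ContinuousLinearMap.coe_coe, innerₛₗ_apply_apply]
  rw [hf.inner_orthogonalProjectionOnto_eq_sum hW]
  refine sum_eq_zero fun j _ => ?_
  by_cases hsj : (s : ℕ) = j
  · rw [← inner_conj_symm (f j), hcross t j fun htj => hst (Fin.ext (hsj.trans htj.symm)),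
      map_zero, mul_zero]
  · rw [hcross s j hsj, zero_mul]

end InnerProductSpace

theorem coprincipal_gram_dets_vanish_general {p q r : ℕ} (V W : Submodule 𝕜 X)
    (e : Fin p → X) (f : Fin q → X) (hef : IsPrincipalPair V W e f)
    (S T : Finset (Fin p)) (hST : S ≠ T) (hS : S.card = r) (hT : T.card = r)
    (a b : Fin r → X)
    (ha : ∀ i, a i ∈ Submodule.span 𝕜 (e '' ↑S))
    (hb : ∀ i, b i ∈ Submodule.span 𝕜 (e '' ↑T)) :
    (Matrix.of fun i j : Fin r => (inner 𝕜 (a i) (b j) : 𝕜)).det = 0 ∧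
    (Matrix.of fun i j : Fin r =>
      (inner 𝕜 ((Submodule.orthogonalProjectionOnto W (a i) : X)) ((Submodule.orthogonalProjectionOnto W (b j) : X)) : 𝕜)).det
      = 0 := by
  have hcard : #(S ∩ T) < Fintype.card (Fin r) := by
    simpa [hS] using card_inter_lt_of_ne_of_card_eq hST (hS.trans hT.symm)
  exact ⟨hef.1.isOrthoᵢ_innerₛₗ.det_eq_zero_of_mem_span hcard ha hb,
    hef.isOrthoᵢ_inner_orthogonalProjectionOnto.det_eq_zero_of_mem_span hcard ha hb⟩

/-- Let `e, f` be associated principal bases of nonzero subspaces `V, W`, `P`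
the orthogonal projection onto `W`, and `S ≠ T` subsets of `Fin p` with `|S| = |T| = r`, spanning
coprincipal subspaces `V₁ = span {e i : i ∈ S}`, `V₂ = span {e i : i ∈ T}`.  Then for families
`a`, `b` valued in `V₁`, `V₂` respectively, `det (⟪a i, b j⟫) = 0` and
`det (⟪P (a i), P (b j)⟫) = 0`. -/
theorem coprincipal_gram_dets_vanish {p q r : ℕ} (V W : Submodule 𝕜 X)
    (hV : V ≠ ⊥) (hW : W ≠ ⊥)
    (e : Fin p → X) (f : Fin q → X) (hef : IsPrincipalPair V W e f)
    (S T : Finset (Fin p)) (hST : S ≠ T) (hS : S.card = r) (hT : T.card = r)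
    (a b : Fin r → X)
    (ha : ∀ i, a i ∈ Submodule.span 𝕜 (e '' ↑S))
    (hb : ∀ i, b i ∈ Submodule.span 𝕜 (e '' ↑T)) :
    (Matrix.of fun i j : Fin r => (inner 𝕜 (a i) (b j) : 𝕜)).det = 0 ∧
    (Matrix.of fun i j : Fin r =>
      (inner 𝕜 ((Submodule.orthogonalProjectionOnto W (a i) : X)) ((Submodule.orthogonalProjectionOnto W (b j) : X)) : 𝕜)).det
      = 0 :=
  coprincipal_gram_dets_vanish_general V W e f hef S T hST hS hT a b ha hb
end

section
/- Let W be a nonzero subspace of X with P the orthogonal projection onto W, and let V₁ and V₂ be nonzero orthogonal subspaces with V = V₁ ⊕ V₂. Then the partition V = V₁ ⊕ V₂ is principal with respect to W — i.e., there exist associated principal bases e : Fin p → X of V and f of W and a subset S ⊆ Fin p with V₁ = span{e i : i ∈ S} and V₂ = span{e i : i ∉ S} — if and only if P(V₁) ⊥ P(V₂). -/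
variable {𝕜 X : Type*} [RCLike 𝕜] [NormedAddCommGroup X] [InnerProductSpace 𝕜 X]
  [FiniteDimensional 𝕜 X]

/-!
If `e, f` are associated principal bases, then `P eᵢ` is a nonnegative multiple of `fᵢ` (or `0`),
so distinct `eᵢ` have orthogonal projections, and `P(V₁) ⟂ P(V₂)` follows.

Conversely, diagonalizing the Gram form `⟪P x, P y⟫` on each `Vₖ` (the operator `A†A` for
`A = P|_{Vₖ}`) gives orthonormal bases of `V₁` and `V₂` whose projections are pairwise orthogonal;
across the two blocks this is the hypothesis `P(V₁) ⟂ P(V₂)`. List first the basis vectors with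
`P eᵢ ≠ 0` and complete the normalized projections `P eᵢ / ‖P eᵢ‖` to an orthonormal basis `f` of
`W`: then `P eᵢ = ‖P eᵢ‖ fᵢ`, so `e, f` are associated principal bases, and `V₁`, `V₂` are spanned by
complementary subsets of `e`.
-/

open Submodule Module
open scoped InnerProductSpace

section

variable {E F : Type*} [NormedAddCommGroup E] [InnerProductSpace 𝕜 E]
  [NormedAddCommGroup F] [InnerProductSpace 𝕜 F]

theorem exists_equiv_fin_lt_card_iff {ι : Type*} [Fintype ι] (p : ι → Prop) [DecidablePred p] :
    ∃ σ : Fin (Fintype.card ι) ≃ ι, ∀ k, p (σ k) ↔ (k : ℕ) < Fintype.card {i // p i} := by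
  have hcard : Fintype.card {i // p i} + Fintype.card {i // ¬p i} = Fintype.card ι := by
    rw [← Fintype.card_sum, Fintype.card_congr (Equiv.sumCompl p)]
  let τ : Fin (Fintype.card {i // p i} + Fintype.card {i // ¬p i}) ≃ ι :=
    finSumFinEquiv.symm.trans
      ((Equiv.sumCongr (Fintype.equivFin _).symm (Fintype.equivFin _).symm).trans
        (Equiv.sumCompl p))
  refine ⟨(finCongr hcard).symm.trans τ, fun k => ?_⟩
  obtain ⟨k, rfl⟩ := (finCongr hcard).surjective k
  induction k using Fin.addCases with
  | left k => simp [τ, k.isLt, ((Fintype.equivFin {i // p i}).symm k).2]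
  | right k => simp [τ, ((Fintype.equivFin {i // ¬p i}).symm k).2]

theorem orthonormal_normalize {ι : Type*} {w : ι → E} (hw : ∀ i, w i ≠ 0)
    (horth : Pairwise fun i j => ⟪w i, w j⟫_𝕜 = 0) :
    Orthonormal 𝕜 fun i => (‖w i‖⁻¹ : 𝕜) • w i :=
  ⟨fun i => norm_smul_inv_norm (hw i), fun i j hij => by
    simp only [inner_smul_left, inner_smul_right, horth hij, mul_zero]⟩

theorem Orthonormal.exists_orthonormalBasis_extension_fin [FiniteDimensional 𝕜 E] {n : ℕ}
    {u : Fin n → E} (hu : Orthonormal 𝕜 u) :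
    ∃ b : OrthonormalBasis (Fin (finrank 𝕜 E)) 𝕜 E,
      ∀ (k : Fin (finrank 𝕜 E)) (hk : (k : ℕ) < n), b k = u ⟨k, hk⟩ := by
  let v : Fin (finrank 𝕜 E) → E := fun k => if hk : (k : ℕ) < n then u ⟨k, hk⟩ else 0
  let s : Set (Fin (finrank 𝕜 E)) := {k | (k : ℕ) < n}
  have hv : s.domRestrict v = u ∘ fun k : s => ⟨k, k.2⟩ := by
    funext k
    exact dif_pos k.2
  have hsv : Orthonormal 𝕜 (s.domRestrict v) := by
    rw [hv]
    exact hu.comp _ fun k l hkl => Subtype.ext (Fin.ext (Fin.mk.inj hkl))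
  obtain ⟨b, hb⟩ := hsv.exists_orthonormalBasis_extension_of_card_eq (by simp)
  exact ⟨b, fun k hk => (hb k hk).trans (dif_pos hk)⟩

theorem LinearMap.exists_orthonormalBasis_pairwise_inner_apply_eq_zero [FiniteDimensional 𝕜 E]
    [FiniteDimensional 𝕜 F] (A : E →ₗ[𝕜] F) :
    ∃ b : OrthonormalBasis (Fin (finrank 𝕜 E)) 𝕜 E,
      Pairwise fun i j => ⟪A (b i), A (b j)⟫_𝕜 = 0 := by
  have hT := LinearMap.isSymmetric_adjoint_comp_self A
  refine ⟨hT.eigenvectorBasis rfl, fun i j hij => ?_⟩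
  dsimp only
  rw [← LinearMap.adjoint_inner_left, ← LinearMap.comp_apply, hT.apply_eigenvectorBasis,
    inner_smul_left, (hT.eigenvectorBasis rfl).orthonormal.inner_eq_zero hij, mul_zero]

theorem OrthonormalBasis.span_range_coe {U : Submodule 𝕜 E} {ι : Type*} [Fintype ι]
    (b : OrthonormalBasis ι 𝕜 U) : span 𝕜 (Set.range fun i => (b i : E)) = U := by
  rw [Set.range_comp' Subtype.val b, ← U.coe_subtype, span_image, ← b.coe_toBasis,
    b.toBasis.span_eq, map_subtype_top]

theorem pairwise_inner_sumElim_eq_zero {ι κ : Type*} {a : ι → E} {b : κ → E}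
    (ha : Pairwise fun i j => ⟪a i, a j⟫_𝕜 = 0) (hb : Pairwise fun i j => ⟪b i, b j⟫_𝕜 = 0)
    (hab : ∀ i j, ⟪a i, b j⟫_𝕜 = 0) :
    Pairwise fun i j => ⟪Sum.elim a b i, Sum.elim a b j⟫_𝕜 = 0 := by
  rintro (i | i) (j | j) hij
  · exact ha fun h => hij (congrArg Sum.inl h)
  · exact hab i j
  · exact inner_eq_zero_symm.mp (hab j i)
  · exact hb fun h => hij (congrArg Sum.inr h)

theorem starProjection_eq_sum_of_orthonormal {ι : Type*} [Fintype ι] {W : Submodule 𝕜 E}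
    [W.HasOrthogonalProjection] {f : ι → E} (hf : Orthonormal 𝕜 f)
    (hfW : span 𝕜 (Set.range f) = W) (x : E) :
    W.starProjection x = ∑ k, ⟪f k, x⟫_𝕜 • f k := by
  subst hfW
  refine eq_starProjection_of_mem_of_inner_eq_zero
    (sum_mem fun k _ => smul_mem _ _ (subset_span ⟨k, rfl⟩)) fun w hw => ?_
  induction hw using span_induction with
  | mem w hw =>
    obtain ⟨k, rfl⟩ := hw
    rw [inner_sub_left, hf.inner_left_fintype, inner_conj_symm, sub_self]
  | zero => exact inner_zero_right _
  | add u v _ _ hu hv => rw [inner_add_right, hu, hv, add_zero]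
  | smul c u _ hu => rw [inner_smul_right, hu, mul_zero]

namespace IsPrincipalPair

variable {p q : ℕ} {V W : Submodule 𝕜 E} [W.HasOrthogonalProjection] {e : Fin p → E}
  {f : Fin q → E}

theorem inner_starProjection_eq_zero (h : IsPrincipalPair V W e f) {i j : Fin p} (hij : i ≠ j) :
    ⟪W.starProjection (e i), W.starProjection (e j)⟫_𝕜 = 0 := by
  obtain ⟨-, -, hf, hfW, hoff, -⟩ := h
  rw [inner_starProjection_left_eq_right,
    starProjection_eq_self_iff.mpr (starProjection_apply_mem _ _),
    starProjection_eq_sum_of_orthonormal hf hfW, inner_sum]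
  refine Finset.sum_eq_zero fun k _ => ?_
  rw [inner_smul_right]
  by_cases hik : (i : ℕ) = k
  · rw [← inner_conj_symm, hoff j k fun hjk => hij (Fin.ext (hik.trans hjk.symm)), map_zero,
      zero_mul]
  · rw [hoff i k hik, mul_zero]

theorem isOrtho_map_starProjection (h : IsPrincipalPair V W e f) (S : Set (Fin p)) :
    (span 𝕜 (e '' S)).map (W.starProjection : E →ₗ[𝕜] E) ⟂
      (span 𝕜 (e '' Sᶜ)).map (W.starProjection : E →ₗ[𝕜] E) := by
  rw [map_span, map_span, isOrtho_span]
  rintro _ ⟨_, ⟨i, hi, rfl⟩, rfl⟩ _ ⟨_, ⟨j, hj, rfl⟩, rfl⟩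
  exact h.inner_starProjection_eq_zero fun hij => hj (hij ▸ hi)

end IsPrincipalPair

theorem isPrincipalPair_of_starProjection_eq {p q : ℕ} {V W : Submodule 𝕜 E}
    [W.HasOrthogonalProjection] {e : Fin p → E} {f : Fin q → E} (he : Orthonormal 𝕜 e)
    (heV : span 𝕜 (Set.range e) = V) (hf : Orthonormal 𝕜 f) (hfW : span 𝕜 (Set.range f) = W)
    (hdiag : ∀ (i : Fin p) (j : Fin q), (i : ℕ) = j →
      ∃ c : ℝ, 0 ≤ c ∧ W.starProjection (e i) = (c : 𝕜) • f j)
    (hout : ∀ i : Fin p, q ≤ (i : ℕ) → W.starProjection (e i) = 0) :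
    IsPrincipalPair V W e f := by
  have hinner : ∀ i j, ⟪e i, f j⟫_𝕜 = ⟪W.starProjection (e i), f j⟫_𝕜 := fun i j => by
    rw [inner_starProjection_left_eq_right,
      starProjection_eq_self_iff.mpr (hfW ▸ subset_span ⟨j, rfl⟩)]
  refine ⟨he, heV, hf, hfW, fun i j hij => ?_, fun i j hij => ?_⟩
  · rw [hinner]
    by_cases hi : (i : ℕ) < q
    · obtain ⟨c, -, hc⟩ := hdiag i ⟨i, hi⟩ rfl
      rw [hc, inner_smul_left, hf.inner_eq_zero fun h => hij (congrArg Fin.val h), mul_zero]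
    · rw [hout i (not_lt.mp hi), inner_zero_left]
  · obtain ⟨c, hc0, hc⟩ := hdiag i j hij
    refine ⟨c, hc0, ?_⟩
    rw [hinner, hc, inner_smul_left, inner_self_eq_norm_sq_to_K, hf.norm_eq_one]
    simp

theorem exists_isPrincipalPair_of_starProjection_ne_zero_iff {p n : ℕ} {V W : Submodule 𝕜 E}
    [FiniteDimensional 𝕜 W] {e : Fin p → E} (he : Orthonormal 𝕜 e)
    (heV : span 𝕜 (Set.range e) = V)
    (hPe : Pairwise fun i j => ⟪W.starProjection (e i), W.starProjection (e j)⟫_𝕜 = 0)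
    (hnp : n ≤ p) (hn : ∀ i, W.starProjection (e i) ≠ 0 ↔ (i : ℕ) < n) :
    ∃ (q : ℕ) (f : Fin q → E), IsPrincipalPair V W e f := by
  let w : Fin n → W := fun k => W.orthogonalProjectionOnto (e (Fin.castLE hnp k))
  have hw : ∀ k, w k ≠ 0 := fun k h =>
    (hn (Fin.castLE hnp k)).mpr k.2 (congrArg Subtype.val h)
  have hu := orthonormal_normalize hw fun k l hkl =>
    hPe fun h => hkl (Fin.castLE_injective hnp h)
  obtain ⟨b, hb⟩ := hu.exists_orthonormalBasis_extension_fin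
  have hnq : n ≤ finrank 𝕜 W := by simpa using hu.linearIndependent.fintype_card_le_finrank
  refine ⟨_, fun j => (b j : E), isPrincipalPair_of_starProjection_eq he heV
    (b.orthonormal.comp_linearIsometry W.subtypeₗᵢ) b.span_range_coe (fun i j hij => ?_)
    fun i hi => ?_⟩
  · by_cases hi : (i : ℕ) < n
    · refine ⟨‖W.starProjection (e i)‖, norm_nonneg _, ?_⟩
      have hk : Fin.castLE hnp ⟨j, hij ▸ hi⟩ = i := Fin.ext hij.symm
      have hne : ‖W.starProjection (e i)‖ ≠ 0 := norm_ne_zero_iff.mpr ((hn i).mpr hi)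
      rw [hb j (hij ▸ hi), coe_smul, smul_smul]
      simp only [w, hk, coe_norm, ← starProjection_apply]
      rw [← RCLike.ofReal_inv, ← RCLike.ofReal_mul, mul_inv_cancel₀ hne, RCLike.ofReal_one,
        one_smul]
    · exact ⟨0, le_rfl, by rw [not_ne_iff.mp (mt (hn i).mp hi), RCLike.ofReal_zero, zero_smul]⟩
  · exact not_ne_iff.mp fun h => absurd ((hn i).mp h) (by omega)

theorem exists_equiv_isPrincipalPair_comp {ι : Type*} [Fintype ι] {V W : Submodule 𝕜 E}
    [FiniteDimensional 𝕜 W] {e : ι → E} (he : Orthonormal 𝕜 e) (heV : span 𝕜 (Set.range e) = V)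
    (hPe : Pairwise fun i j => ⟪W.starProjection (e i), W.starProjection (e j)⟫_𝕜 = 0) :
    ∃ (σ : Fin (Fintype.card ι) ≃ ι) (q : ℕ) (f : Fin q → E),
      IsPrincipalPair V W (e ∘ σ) f := by
  classical
  obtain ⟨σ, hσ⟩ := exists_equiv_fin_lt_card_iff fun i => W.starProjection (e i) ≠ 0
  refine ⟨σ, exists_isPrincipalPair_of_starProjection_ne_zero_iff (he.comp σ σ.injective) ?_
    (fun k l hkl => hPe (σ.injective.ne hkl)) (Fintype.card_subtype_le _) hσ⟩
  rwa [Set.range_comp, σ.range_eq_univ, Set.image_univ]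

end

theorem exists_isPrincipalPair_of_isOrtho_map_starProjection {V₁ V₂ W : Submodule 𝕜 X}
    (h₁₂ : V₁ ⟂ V₂)
    (hP : V₁.map (W.starProjection : X →ₗ[𝕜] X) ⟂ V₂.map (W.starProjection : X →ₗ[𝕜] X)) :
    ∃ (p q : ℕ) (e : Fin p → X) (f : Fin q → X) (S : Set (Fin p)),
      IsPrincipalPair (V₁ ⊔ V₂) W e f ∧ V₁ = span 𝕜 (e '' S) ∧ V₂ = span 𝕜 (e '' Sᶜ) := by
  obtain ⟨b₁, hb₁⟩ := LinearMap.exists_orthonormalBasis_pairwise_inner_apply_eq_zero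
    ((W.starProjection : X →ₗ[𝕜] X) ∘ₗ V₁.subtype)
  obtain ⟨b₂, hb₂⟩ := LinearMap.exists_orthonormalBasis_pairwise_inner_apply_eq_zero
    ((W.starProjection : X →ₗ[𝕜] X) ∘ₗ V₂.subtype)
  let a₁ : Fin (finrank 𝕜 V₁) → X := fun i => b₁ i
  let a₂ : Fin (finrank 𝕜 V₂) → X := fun i => b₂ i
  have ha₁ := b₁.orthonormal.comp_linearIsometry V₁.subtypeₗᵢ
  have ha₂ := b₂.orthonormal.comp_linearIsometry V₂.subtypeₗᵢ
  have he : Orthonormal 𝕜 (Sum.elim a₁ a₂) :=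
    ⟨by rintro (i | i); exacts [ha₁.norm_eq_one i, ha₂.norm_eq_one i],
      pairwise_inner_sumElim_eq_zero ha₁.2 ha₂.2 fun i j =>
        isOrtho_iff_inner_eq.mp h₁₂ _ (b₁ i).2 _ (b₂ j).2⟩
  have hPe := pairwise_inner_sumElim_eq_zero (a := W.starProjection ∘ a₁)
    (b := W.starProjection ∘ a₂) hb₁ hb₂ fun i j =>
      isOrtho_iff_inner_eq.mp hP _ (mem_map_of_mem (b₁ i).2) _ (mem_map_of_mem (b₂ j).2)
  rw [← Sum.comp_elim] at hPe
  obtain ⟨σ, q, f, hpp⟩ := exists_equiv_isPrincipalPair_comp he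
    (by rw [Set.Sum.elim_range, span_union, b₁.span_range_coe, b₂.span_range_coe]) hPe
  refine ⟨_, q, _, f, σ ⁻¹' Set.range Sum.inl, hpp, ?_, ?_⟩
  · rw [Set.image_comp, σ.image_preimage, ← Set.range_comp, Sum.elim_comp_inl,
      b₁.span_range_coe]
  · rw [← Set.preimage_compl, Set.compl_range_inl, Set.image_comp, σ.image_preimage,
      ← Set.range_comp, Sum.elim_comp_inr, b₂.span_range_coe]

theorem principal_partition_iff_orthogonal_projections_general (V W V₁ V₂ : Submodule 𝕜 X)
    (horth : ∀ x ∈ V₁, ∀ y ∈ V₂, (inner 𝕜 x y : 𝕜) = 0)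
    (hV : V₁ ⊔ V₂ = V) :
    (∃ (p q : ℕ) (e : Fin p → X) (f : Fin q → X) (S : Set (Fin p)),
        IsPrincipalPair V W e f ∧
        V₁ = Submodule.span 𝕜 (e '' S) ∧ V₂ = Submodule.span 𝕜 (e '' Sᶜ)) ↔
      (∀ x ∈ Submodule.map (W.subtype ∘ₗ (Submodule.orthogonalProjectionOnto W).toLinearMap) V₁,
        ∀ y ∈ Submodule.map (W.subtype ∘ₗ (Submodule.orthogonalProjectionOnto W).toLinearMap) V₂,
          (inner 𝕜 x y : 𝕜) = 0) := by
  have hP : W.subtype ∘ₗ (orthogonalProjectionOnto W).toLinearMap =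
      (W.starProjection : X →ₗ[𝕜] X) := rfl
  rw [hP, ← isOrtho_iff_inner_eq]
  subst hV
  constructor
  · rintro ⟨p, q, e, f, S, hpp, rfl, rfl⟩
    exact hpp.isOrtho_map_starProjection S
  · exact exists_isPrincipalPair_of_isOrtho_map_starProjection (isOrtho_iff_inner_eq.mpr horth)

/-- Let `W` be a nonzero subspace with orthogonal projection `P`, and let
`V₁, V₂` be nonzero orthogonal subspaces with `V = V₁ ⊕ V₂`.  The partition `V = V₁ ⊕ V₂` is
principal with respect to `W` (i.e. `V₁` and `V₂` are spanned by complementary subsets of a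
single principal basis of `V` w.r.t. `W`) if and only if `P(V₁) ⊥ P(V₂)`. -/
theorem principal_partition_iff_orthogonal_projections (V W V₁ V₂ : Submodule 𝕜 X)
    (hW : W ≠ ⊥) (hV₁ : V₁ ≠ ⊥) (hV₂ : V₂ ≠ ⊥)
    (horth : ∀ x ∈ V₁, ∀ y ∈ V₂, (inner 𝕜 x y : 𝕜) = 0)
    (hV : V₁ ⊔ V₂ = V) :
    (∃ (p q : ℕ) (e : Fin p → X) (f : Fin q → X) (S : Set (Fin p)),
        IsPrincipalPair V W e f ∧
        V₁ = Submodule.span 𝕜 (e '' S) ∧ V₂ = Submodule.span 𝕜 (e '' Sᶜ)) ↔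
      (∀ x ∈ Submodule.map (W.subtype ∘ₗ (Submodule.orthogonalProjectionOnto W).toLinearMap) V₁,
        ∀ y ∈ Submodule.map (W.subtype ∘ₗ (Submodule.orthogonalProjectionOnto W).toLinearMap) V₂,
          (inner 𝕜 x y : 𝕜) = 0) :=
  principal_partition_iff_orthogonal_projections_general V W V₁ V₂ horth hV
end

section
/- Let e : Fin p → X and f : Fin q → X be associated principal bases of nonzero subspaces V and W, set m = min(p, q) and c_i = ⟪e i, f i⟫ (a nonnegative real) for i < m, and let Q be the orthogonal projection of X onto the orthogonal complement W⊥. Then det(Gram(Q ∘ e)) = ∏_{i < m} (1 − c_i²). Equivalently, the complementary Grassmann angle satisfies cos²Θ⊥_{V,W} = ∏_{i=1}^m sin²θ_i, where θ_i = arccos(c_i) are the principal angles between V and W. -/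
/-! With `P` the projection onto `W = span f`, the projection onto `Wᗮ` is the self-adjoint
idempotent `1 - P`, so `⟪Q eᵢ, Q eⱼ⟫ = δᵢⱼ - ⟪eᵢ, P eⱼ⟫ = δᵢⱼ - ∑ₖ ⟪eᵢ, fₖ⟫ ⟪fₖ, eⱼ⟫`.
Since `eᵢ ⟂ fₖ` unless `i = k`, this Gram matrix is diagonal, with entry `1 - cᵢ²` for
`i < min p q` and `1` for the remaining indices. -/

variable {𝕜 X : Type*} [RCLike 𝕜] [NormedAddCommGroup X] [InnerProductSpace 𝕜 X]
  [FiniteDimensional 𝕜 X]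

open scoped InnerProductSpace
open Submodule

section

variable {E : Type*} [NormedAddCommGroup E] [InnerProductSpace 𝕜 E]

theorem Submodule.inner_starProjection_orthogonal_s18 (K : Submodule 𝕜 E) [K.HasOrthogonalProjection]
    (x y : E) :
    ⟪Kᗮ.starProjection x, Kᗮ.starProjection y⟫_𝕜 = ⟪x, y⟫_𝕜 - ⟪x, K.starProjection y⟫_𝕜 := by
  rw [inner_starProjection_left_eq_right,
    starProjection_eq_self_iff.mpr (Kᗮ.starProjection_apply_mem y),
    starProjection_orthogonal_val, inner_sub_right]

theorem Orthonormal.starProjection_eq_sum_s18 {ι : Type*} [Fintype ι] {f : ι → E}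
    (hf : Orthonormal 𝕜 f) {K : Submodule 𝕜 E} [K.HasOrthogonalProjection]
    (hfK : span 𝕜 (Set.range f) = K) (y : E) :
    K.starProjection y = ∑ k, ⟪f k, y⟫_𝕜 • f k := by
  subst hfK
  refine eq_starProjection_of_mem_of_inner_eq_zero
    (sum_mem fun k _ => smul_mem _ _ (subset_span ⟨k, rfl⟩)) fun w hw => ?_
  induction hw using span_induction with
  | mem _ hw =>
    obtain ⟨j, rfl⟩ := hw
    rw [inner_sub_left, hf.inner_left_fintype, inner_conj_symm, sub_self]
  | zero => exact inner_zero_right _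
  | add _ _ _ _ hx hy => rw [inner_add_right, hx, hy, add_zero]
  | smul _ _ _ hx => rw [inner_smul_right, hx, mul_zero]

theorem Orthonormal.inner_starProjection_eq_sum_s18 {ι : Type*} [Fintype ι] {f : ι → E}
    (hf : Orthonormal 𝕜 f) {K : Submodule 𝕜 E} [K.HasOrthogonalProjection]
    (hfK : span 𝕜 (Set.range f) = K) (x y : E) :
    ⟪x, K.starProjection y⟫_𝕜 = ∑ k, ⟪x, f k⟫_𝕜 * ⟪f k, y⟫_𝕜 := by
  simp only [hf.starProjection_eq_sum_s18 hfK, inner_sum, inner_smul_right, mul_comm]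

theorem gram_starProjection_orthogonal_eq_diagonal {p q : ℕ} {e : Fin p → E} {f : Fin q → E}
    (he : Orthonormal 𝕜 e) (hf : Orthonormal 𝕜 f) {W : Submodule 𝕜 E} [W.HasOrthogonalProjection]
    (hfW : span 𝕜 (Set.range f) = W)
    (hcross : ∀ (i : Fin p) (k : Fin q), (i : ℕ) ≠ (k : ℕ) → ⟪e i, f k⟫_𝕜 = 0) :
    Matrix.of (fun i j => ⟪Wᗮ.starProjection (e i), Wᗮ.starProjection (e j)⟫_𝕜) =
      Matrix.diagonal fun i => ((1 - ∑ k, ‖⟪e i, f k⟫_𝕜‖ ^ 2 : ℝ) : 𝕜) := by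
  ext i j
  rw [Matrix.of_apply, Matrix.diagonal_apply, inner_starProjection_orthogonal_s18,
    hf.inner_starProjection_eq_sum_s18 hfW, orthonormal_iff_ite.mp he]
  split_ifs with hij
  · subst hij
    push_cast
    simp only [← inner_conj_symm (f _) (e i), RCLike.mul_conj]
  · rw [zero_sub, neg_eq_zero]
    refine Finset.sum_eq_zero fun k _ => ?_
    by_cases hik : (i : ℕ) = k
    · rw [inner_eq_zero_symm.mp (hcross j k fun hjk => hij (Fin.ext (hik.trans hjk.symm))),
        mul_zero]
    · rw [hcross i k hik, zero_mul]

end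

theorem prod_one_sub_sum_eq_prod_min {R : Type*} [CommRing R] {p q : ℕ} (g : Fin p → Fin q → R)
    (hg : ∀ (i : Fin p) (k : Fin q), (i : ℕ) ≠ (k : ℕ) → g i k = 0) :
    ∏ i, (1 - ∑ k, g i k) =
      ∏ i : Fin (min p q),
        (1 - g (Fin.castLE (min_le_left p q) i) (Fin.castLE (min_le_right p q) i)) := by
  symm
  refine Fintype.prod_of_injective (Fin.castLE (min_le_left p q)) (Fin.castLE_injective _) _ _
    (fun i hi => ?_) (fun i => ?_)
  · have hqi : q ≤ i := by
      by_contra! hiq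
      exact hi ⟨⟨i, lt_min i.2 hiq⟩, rfl⟩
    rw [Finset.sum_eq_zero fun k _ => hg i k (by omega), sub_zero]
  · rw [Fintype.sum_eq_single (Fin.castLE _ i) fun k hk => hg _ _ fun h => hk (Fin.ext h.symm)]

theorem sq_cos_complementary_grassmann_eq_prod_sq_sin_principal_general {p q : ℕ}
    (V W : Submodule 𝕜 X)
    (e : Fin p → X) (f : Fin q → X) (hef : IsPrincipalPair V W e f) :
    (Matrix.of fun i j : Fin p =>
        (inner 𝕜 ((Wᗮ.orthogonalProjection (e i) : X))
               ((Wᗮ.orthogonalProjection (e j) : X)) : 𝕜)).det =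
      ((∏ i : Fin (min p q),
          (1 - (RCLike.re (inner 𝕜 (e (Fin.castLE (min_le_left p q) i))
            (f (Fin.castLE (min_le_right p q) i)) : 𝕜)) ^ 2) : ℝ) : 𝕜) := by
  obtain ⟨he, -, hf, hfW, hcross, hdiag⟩ := hef
  simp only [← starProjection_apply]
  rw [gram_starProjection_orthogonal_eq_diagonal he hf hfW hcross, Matrix.det_diagonal,
    ← RCLike.ofReal_prod, prod_one_sub_sum_eq_prod_min _ fun i k hik => by simp [hcross i k hik]]
  congr 1
  refine Finset.prod_congr rfl fun i _ => ?_
  obtain ⟨c, -, hc⟩ := hdiag (Fin.castLE _ i) (Fin.castLE _ i) rfl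
  rw [hc, RCLike.norm_ofReal, sq_abs, RCLike.ofReal_re]

/-- Let `e, f` be associated principal bases of nonzero subspaces `V, W`,
`m = min p q`, `cᵢ = ⟪e i, f i⟫` (nonnegative reals, the cosines of the principal angles), and
`Q` the orthogonal projection onto `Wᗮ`.  Then `det (Gram (Q ∘ e)) = ∏_{i < m} (1 - cᵢ²)`,
i.e. `cos² Θ⊥_{V,W} = ∏ᵢ sin² θᵢ`. -/
theorem sq_cos_complementary_grassmann_eq_prod_sq_sin_principal {p q : ℕ}
    (V W : Submodule 𝕜 X) (hV : V ≠ ⊥) (hW : W ≠ ⊥)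
    (e : Fin p → X) (f : Fin q → X) (hef : IsPrincipalPair V W e f) :
    (Matrix.of fun i j : Fin p =>
        (inner 𝕜 ((Wᗮ.orthogonalProjection (e i) : X))
               ((Wᗮ.orthogonalProjection (e j) : X)) : 𝕜)).det =
      ((∏ i : Fin (min p q),
          (1 - (RCLike.re (inner 𝕜 (e (Fin.castLE (min_le_left p q) i))
            (f (Fin.castLE (min_le_right p q) i)) : 𝕜)) ^ 2) : ℝ) : 𝕜) :=
  sq_cos_complementary_grassmann_eq_prod_sq_sin_principal_general V W e f hef
end
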